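/- arXiv:1807.05109 — 5 statements merged into one kernel-verified Lean document; each statement's English description precedes it below -/
import Mathlib

section
/- Let t ≥ 0, s > 0, and let φ : (0,∞) → ℝ be a smooth function vanishing for r ≥ t+1. Then there is an absolute constant C > 0 (independent of t, s and φ) such that ∫₀^∞ (t+2−r)^s φ(r)² dr ≤ C ∫₀^∞ (t+2−r)^s (φ′(r) + φ(r)/r)² r² dr. -/
open MeasureTheory Real Set

private lemma hardy_pt_ineq (W W' p d r : ℝ) (hW : 0 ≤ W) (hW' : W' ≤ 0) (hr : 0 < r) :
    W * p^2 ≤ 1/2 * (W * p^2) + 2 * (W * (r*d+p)^2)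
      - (W' * r * p^2 + 2 * W * p * (p + r*d) - W * p^2) := by
  nlinarith [mul_nonneg hW (sq_nonneg (p - 2*(p+r*d))),
    mul_nonneg (mul_nonneg (neg_nonneg.2 hW') hr.le) (sq_nonneg p)]

private lemma hardy_aux_deriv (t s : ℝ) (φ : ℝ → ℝ) (hφ : ContDiff ℝ (⊤ : ℕ∞) φ) (r : ℝ)
    (hr0 : 0 < r) (hr2 : r < t + 2) :
    HasDerivAt (fun r => (t+2-r)^s * (r * φ r)^2 / r)
      ((s*(t+2-r)^(s-1)*(-1)) * r * (φ r)^2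
        + 2 * (t+2-r)^s * (φ r) * (φ r + r * deriv φ r) - (t+2-r)^s * (φ r)^2) r := by
  have hφd : ∀ x, HasDerivAt φ (deriv φ x) x :=
    fun x => (hφ.differentiable (by simp) x).hasDerivAt
  have h1 : HasDerivAt (fun y : ℝ => t + 2 - y) (-1) r := by
    simpa using (hasDerivAt_id r).const_sub (t+2)
  have hw : HasDerivAt (fun y : ℝ => (t+2-y)^s) (s * (t+2-r)^(s-1) * (-1)) r := by
    exact (Real.hasDerivAt_rpow_const (x := t+2-r) (p := s)
      (Or.inl (by linarith))).comp r h1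
  have hψ : HasDerivAt (fun y : ℝ => y * φ y) (1 * φ r + r * deriv φ r) r :=
    (hasDerivAt_id r).mul (hφd r)
  have hψ2 := hψ.mul hψ
  have H := (hw.mul hψ2).div (hasDerivAt_id r) (ne_of_gt hr0)
  have heq : (fun y => (t+2-y)^s * (y * φ y)^2 / y)
      = fun y => (t+2-y)^s * (y * φ y * (y * φ y)) / id y := by
    funext y; simp [pow_two]
  rw [heq]
  convert H using 1
  · rfl
  · rfl
  · rfl
  simp only [id, Pi.mul_apply]
  field_simp
  ring

/-- **First Hardy-type inequality of Lemma 2.2**: a one-dimensional weighted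
estimate with weight `(t+2-r)^s`, for smooth functions vanishing for `r ≥ t+1`,
with an absolute constant independent of `t`, `s` and `φ`. -/
theorem hardy_type_one :
    ∃ C : ℝ, 0 < C ∧ ∀ (t s : ℝ), 0 ≤ t → 0 < s →
      ∀ φ : ℝ → ℝ, ContDiff ℝ (⊤ : ℕ∞) φ → (∀ r : ℝ, t + 1 ≤ r → φ r = 0) →
        (∫ r in Ioi (0:ℝ), (t + 2 - r) ^ s * (φ r) ^ 2)
          ≤ C * ∫ r in Ioi (0:ℝ),
              (t + 2 - r) ^ s * (deriv φ r + φ r / r) ^ 2 * r ^ 2 := by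
  refine ⟨4, by norm_num, ?_⟩
  intro t s ht hs φ hφ hφ0
  set a : ℝ := t + 1 with ha
  have ha0 : (0:ℝ) < a := by simp only [ha]; linarith
  have ha2 : a < t + 2 := by simp only [ha]; linarith
  have hφc : Continuous φ := hφ.continuous
  have hdc : Continuous (deriv φ) := hφ.continuous_deriv (by simp)
  -- continuity of powers of the weight
  have hpowAt : ∀ q r : ℝ, r < t + 2 → ContinuousAt (fun r => (t+2-r)^q) r := by
    intro q r hr
    have h0 : t + 2 - r ≠ 0 := by linarith
    exact (Real.continuousAt_rpow_const _ q (Or.inl h0)).comp (by fun_prop)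
  have hpow : ∀ q : ℝ, ContinuousOn (fun r => (t+2-r)^q) (Iic a) := by
    intro q r hr
    exact (hpowAt q r (lt_of_le_of_lt hr ha2)).continuousWithinAt
  set f1 : ℝ → ℝ := fun r => (t+2-r)^s * (φ r)^2 with hf1
  set f2 : ℝ → ℝ := fun r => (t+2-r)^s * (r * deriv φ r + φ r)^2 with hf2
  set g : ℝ → ℝ := fun r => (s*(t+2-r)^(s-1)*(-1)) * r * (φ r)^2
      + 2 * (t+2-r)^s * (φ r) * (φ r + r * deriv φ r) - (t+2-r)^s * (φ r)^2 with hg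
  set B : ℝ → ℝ := fun ε => (t+2-ε)^s * ε * (φ ε)^2 with hB
  have hf1c : ContinuousOn f1 (Iic a) :=
    (hpow s).mul ((hφc.pow 2).continuousOn)
  have hf2c : ContinuousOn f2 (Iic a) :=
    (hpow s).mul ((((continuous_id.mul hdc).add hφc).pow 2).continuousOn)
  have hgc : ContinuousOn g (Iic a) := by
    apply ContinuousOn.sub
    · apply ContinuousOn.add
      · exact (((continuousOn_const.mul (hpow (s-1))).mul continuousOn_const).mul
          continuous_id.continuousOn).mul ((hφc.pow 2).continuousOn)
      · exact ((continuousOn_const.mul (hpow s)).mul hφc.continuousOn).mul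
          ((hφc.add (continuous_id.mul hdc)).continuousOn)
    · exact (hpow s).mul ((hφc.pow 2).continuousOn)
  have hIcc : Icc (0:ℝ) a ⊆ Iic a := Icc_subset_Iic_self
  have hInt1 : IntegrableOn f1 (Ioo 0 a) :=
    ((hf1c.mono hIcc).integrableOn_Icc).mono_set Ioo_subset_Icc_self
  have hInt2 : IntegrableOn f2 (Ioo 0 a) :=
    ((hf2c.mono hIcc).integrableOn_Icc).mono_set Ioo_subset_Icc_self
  set J : ℝ := ∫ r in Ioo (0:ℝ) a, f2 r with hJ
  -- Step A: the key estimate for each ε ∈ (0, a)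
  have stepA : ∀ ε ∈ Ioo (0:ℝ) a, (∫ r in Ioo ε a, f1 r) ≤ 4 * J + 2 * B ε := by
    rintro ε ⟨hε0, hεa⟩
    have huIcc : uIcc ε a = Icc ε a := uIcc_of_le hεa.le
    have hsubIic : uIcc ε a ⊆ Iic a := by rw [huIcc]; exact Icc_subset_Iic_self
    have hii1 : IntervalIntegrable f1 volume ε a :=
      (hf1c.mono hsubIic).intervalIntegrable
    have hii2 : IntervalIntegrable f2 volume ε a :=
      (hf2c.mono hsubIic).intervalIntegrable
    have hiig : IntervalIntegrable g volume ε a :=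
      (hgc.mono hsubIic).intervalIntegrable
    -- FTC
    have hftc : (∫ r in ε..a, g r)
        = (t+2-a)^s * (a * φ a)^2 / a - (t+2-ε)^s * (ε * φ ε)^2 / ε := by
      apply intervalIntegral.integral_eq_sub_of_hasDerivAt
        (f := fun r => (t+2-r)^s * (r * φ r)^2 / r) _ hiig
      intro x hx
      rw [huIcc] at hx
      exact hardy_aux_deriv t s φ hφ x (lt_of_lt_of_le hε0 hx.1)
        (lt_of_le_of_lt hx.2 ha2)
    have hGa : (t+2-a)^s * (a * φ a)^2 / a = 0 := by
      rw [hφ0 a le_rfl]; simp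
    have hGε : (t+2-ε)^s * (ε * φ ε)^2 / ε = B ε := by
      simp only [hB]
      field_simp
    rw [hGa, hGε, zero_sub] at hftc
    -- pointwise inequality and monotonicity of the integral
    have hptw : ∀ x ∈ Icc ε a, f1 x ≤ 1/2 * f1 x + 2 * f2 x - g x := by
      intro x hx
      have hx2 : t + 2 - x ≥ 0 := by
        have := hx.2; linarith
      have hW : (0:ℝ) ≤ (t+2-x)^s := Real.rpow_nonneg hx2 s
      have hW' : s*(t+2-x)^(s-1)*(-1) ≤ 0 := by
        have : (0:ℝ) ≤ s*(t+2-x)^(s-1) :=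
          mul_nonneg hs.le (Real.rpow_nonneg hx2 _)
        nlinarith
      have := hardy_pt_ineq ((t+2-x)^s) (s*(t+2-x)^(s-1)*(-1)) (φ x) (deriv φ x) x
        hW hW' (lt_of_lt_of_le hε0 hx.1)
      simp only [hf1, hf2, hg]
      linarith
    have hmono := intervalIntegral.integral_mono_on hεa.le hii1
      (((hii1.const_mul (1/2)).add (hii2.const_mul 2)).sub hiig) hptw
    rw [intervalIntegral.integral_sub ((hii1.const_mul (1/2)).add (hii2.const_mul 2)) hiig,
      intervalIntegral.integral_add (hii1.const_mul (1/2)) (hii2.const_mul 2),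
      intervalIntegral.integral_const_mul, intervalIntegral.integral_const_mul,
      hftc] at hmono
    -- pass from interval integrals to set integrals over Ioo
    have hset1 : (∫ r in ε..a, f1 r) = ∫ r in Ioo ε a, f1 r := by
      rw [intervalIntegral.integral_of_le hεa.le,
        ← Measure.restrict_congr_set Ioo_ae_eq_Ioc]
    have hset2 : (∫ r in ε..a, f2 r) = ∫ r in Ioo ε a, f2 r := by
      rw [intervalIntegral.integral_of_le hεa.le,
        ← Measure.restrict_congr_set Ioo_ae_eq_Ioc]
    rw [hset1, hset2] at hmono
    have hY : (∫ r in Ioo ε a, f2 r) ≤ J := by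
      apply setIntegral_mono_set hInt2
      · refine (ae_restrict_iff' measurableSet_Ioo).2 (ae_of_all _ ?_)
        intro r hr
        exact mul_nonneg (Real.rpow_nonneg (by linarith [hr.2, ha2]) s) (sq_nonneg _)
      · exact HasSubset.Subset.eventuallyLE (Ioo_subset_Ioo_left hε0.le)
    linarith
  -- Step B: pass to the limit ε → 0
  set I : ℝ := ∫ r in Ioo (0:ℝ) a, f1 r with hI
  have hIJ : I ≤ 4 * J := by
    set S : ℕ → Set ℝ := fun n => Ioo (a/((n:ℝ)+2)) a with hS
    have hεmem : ∀ n : ℕ, a/((n:ℝ)+2) ∈ Ioo (0:ℝ) a := by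
      intro n
      constructor
      · positivity
      · apply div_lt_self ha0
        have : (0:ℝ) ≤ (n:ℝ) := Nat.cast_nonneg n
        linarith
    have hSmono : Monotone S := by
      intro m n hmn
      apply Ioo_subset_Ioo_left
      have h2 : ((m:ℝ)) ≤ (n:ℝ) := by exact_mod_cast hmn
      gcongr
    have hSunion : (⋃ n, S n) = Ioo (0:ℝ) a := by
      ext x
      simp only [hS, mem_iUnion, mem_Ioo]
      constructor
      · rintro ⟨n, h1, h2⟩
        exact ⟨lt_trans (hεmem n).1 h1, h2⟩
      · rintro ⟨hx0, hxa⟩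
        obtain ⟨n, hn⟩ := exists_nat_gt (a/x)
        refine ⟨n, ?_, hxa⟩
        rw [div_lt_iff₀ (by positivity)]
        have := (div_lt_iff₀ hx0).1 hn
        nlinarith
    have htendI : Filter.Tendsto (fun n => ∫ r in S n, f1 r) Filter.atTop (nhds I) := by
      have h := tendsto_setIntegral_of_monotone (μ := volume) (f := f1)
        (fun n : ℕ => measurableSet_Ioo) hSmono (by rw [hSunion]; exact hInt1)
      rw [hSunion] at h
      exact h
    have hεtend : Filter.Tendsto (fun n : ℕ => a/((n:ℝ)+2)) Filter.atTop (nhds 0) := by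
      apply Filter.Tendsto.div_atTop (tendsto_const_nhds)
      exact Filter.tendsto_atTop_add_const_right _ 2 tendsto_natCast_atTop_atTop
    have hBtend : Filter.Tendsto (fun n : ℕ => 4 * J + 2 * B (a/((n:ℝ)+2)))
        Filter.atTop (nhds (4 * J)) := by
      have hBc : ContinuousAt B 0 := by
        simp only [hB]
        exact ((hpowAt s 0 (by linarith)).mul continuousAt_id).mul
          ((hφc.pow 2).continuousAt)
      have hB0 : B 0 = 0 := by simp [hB]
      have h1 : Filter.Tendsto (fun n : ℕ => B (a/((n:ℝ)+2))) Filter.atTop (nhds 0) := by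
        have := hBc.tendsto.comp hεtend
        rwa [hB0] at this
      have : Filter.Tendsto (fun n : ℕ => 4 * J + 2 * B (a/((n:ℝ)+2)))
          Filter.atTop (nhds (4 * J + 2 * 0)) :=
        (tendsto_const_nhds).add ((tendsto_const_nhds).mul h1)
      simpa using this
    exact le_of_tendsto_of_tendsto' htendI hBtend (fun n => stepA _ (hεmem n))
  -- Step C: identify the integrals over Ioi 0 with I and J
  have hdisj : Disjoint (Ioo (0:ℝ) a) (Ici a) := by
    rw [Set.disjoint_left]
    rintro x ⟨_, hxa⟩ hx
    exact absurd hx (not_le.2 hxa)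
  have hsplit : Ioo (0:ℝ) a ∪ Ici a = Ioi 0 := Ioo_union_Ici_eq_Ioi ha0
  -- LHS
  have hf1zero : EqOn f1 0 (Ici a) := by
    intro r hr
    simp only [hf1, hφ0 r hr, Pi.zero_apply]
    ring
  have hE1 : (∫ r in Ioi (0:ℝ), (t + 2 - r) ^ s * (φ r) ^ 2) = I := by
    rw [← hsplit, setIntegral_union hdisj measurableSet_Ici hInt1
      ((integrableOn_zero).congr_fun (fun r hr => (hf1zero hr).symm) measurableSet_Ici)]
    rw [setIntegral_congr_fun measurableSet_Ici hf1zero]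
    simp
    exact hI.symm
  -- RHS
  set f3 : ℝ → ℝ := fun r => (t + 2 - r) ^ s * (deriv φ r + φ r / r) ^ 2 * r ^ 2 with hf3
  have hf3eq : EqOn f3 f2 (Ioo 0 a) := by
    intro r hr
    have hr0 : r ≠ 0 := ne_of_gt hr.1
    have h : (deriv φ r + φ r / r) * r = r * deriv φ r + φ r := by
      rw [add_mul, div_mul_cancel₀ _ hr0]; ring
    simp only [hf3, hf2]
    rw [mul_assoc, ← mul_pow, h]
  have hf3zeroIoi : ∀ r ∈ Ioi a, f3 r = 0 := by
    intro r hr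
    have hrI : r ∈ Ioi a := hr
    have hφr : φ r = 0 := hφ0 r (le_of_lt hrI)
    have hdr : deriv φ r = 0 := by
      have hev : φ =ᶠ[nhds r] (fun _ => (0:ℝ)) := by
        filter_upwards [isOpen_Ioi.mem_nhds hrI] with x hx
        exact hφ0 x (le_of_lt hx)
      rw [hev.deriv_eq]
      simp
    simp [hf3, hφr, hdr]
  have hrestr : volume.restrict (Ici a) = volume.restrict (Ioi a) :=
    (Measure.restrict_congr_set Ioi_ae_eq_Ici).symm
  have hf3IntIci : IntegrableOn f3 (Ici a) := by
    unfold IntegrableOn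
    rw [hrestr]
    exact (integrableOn_zero).congr_fun (fun r hr => (hf3zeroIoi r hr).symm) measurableSet_Ioi
  have hf3IntIoo : IntegrableOn f3 (Ioo 0 a) :=
    hInt2.congr_fun (fun r hr => (hf3eq hr).symm) measurableSet_Ioo
  have hE2 : (∫ r in Ioi (0:ℝ), f3 r) = J := by
    rw [← hsplit, setIntegral_union hdisj measurableSet_Ici hf3IntIoo hf3IntIci]
    have h1 : (∫ r in Ici a, f3 r) = 0 := by
      rw [show (∫ r in Ici a, f3 r) = ∫ r in Ioi a, f3 r by rw [hrestr]]
      rw [setIntegral_congr_fun measurableSet_Ioi hf3zeroIoi]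
      simp
    rw [h1, setIntegral_congr_fun measurableSet_Ioo hf3eq]
    simp
    exact hJ.symm
  calc (∫ r in Ioi (0:ℝ), (t + 2 - r) ^ s * (φ r) ^ 2) = I := hE1
    _ ≤ 4 * J := hIJ
    _ = 4 * ∫ r in Ioi (0:ℝ), f3 r := by rw [hE2]
end

section
/- Let t ≥ 0, s > 0, and let φ : (0,∞) → ℝ be a smooth function vanishing for r ≥ t+1. Then there is an absolute constant C > 0 (independent of t, s and φ) such that ∫₀^∞ (t+2−r)^s φ′(r)² r² dr ≤ C ∫₀^∞ (t+2−r)^s (φ′(r) + φ(r)/r)² r² dr. -/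
open MeasureTheory Real Set

/-- **Second Hardy-type inequality of Lemma 2.2**: a one-dimensional weighted
estimate with weight `(t+2-r)^s`, for smooth functions vanishing for `r ≥ t+1`,
with an absolute constant independent of `t`, `s` and `φ`. -/
theorem hardy_type_two :
    ∃ C : ℝ, 0 < C ∧ ∀ (t s : ℝ), 0 ≤ t → 0 < s →
      ∀ φ : ℝ → ℝ, ContDiff ℝ (⊤ : ℕ∞) φ → (∀ r : ℝ, t + 1 ≤ r → φ r = 0) →
        (∫ r in Ioi (0:ℝ), (t + 2 - r) ^ s * (deriv φ r) ^ 2 * r ^ 2)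
          ≤ C * ∫ r in Ioi (0:ℝ),
              (t + 2 - r) ^ s * (deriv φ r + φ r / r) ^ 2 * r ^ 2 := by
  refine ⟨10, by norm_num, ?_⟩
  intro t s ht hs φ hφ h0
  set T : ℝ := t + 1 with hT
  have hT0 : (0:ℝ) < T := by positivity
  -- derivative facts
  have hφd : Differentiable ℝ φ := hφ.differentiable (by simp)
  have hφ' : Continuous (deriv φ) := hφ.continuous_deriv (by simp)
  have hd0' : ∀ r : ℝ, T < r → deriv φ r = 0 := by
    intro r hr
    have he : φ =ᶠ[nhds r] (fun _ => 0) := by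
      filter_upwards [isOpen_Ioi.mem_nhds (show T < r from hr)] with x hx
      exact h0 x hx.le
    rw [he.deriv_eq, deriv_const]
  have hd0 : ∀ r : ℝ, T ≤ r → deriv φ r = 0 := by
    intro r hr
    rcases eq_or_lt_of_le hr with heq | hlt
    · rw [← heq]
      have h1 : Filter.Tendsto (deriv φ) (nhdsWithin T (Ioi T)) (nhds (deriv φ T)) :=
        (hφ'.continuousAt.tendsto).mono_left nhdsWithin_le_nhds
      have h2 : Filter.Tendsto (deriv φ) (nhdsWithin T (Ioi T)) (nhds 0) := by
        refine Filter.Tendsto.congr' ?_ tendsto_const_nhds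
        filter_upwards [self_mem_nhdsWithin] with x hx
        exact (hd0' x hx).symm
      exact tendsto_nhds_unique h1 h2
    · exact hd0' r hlt
  -- weight positivity on [0, T]
  have hw : ∀ r ∈ Icc (0:ℝ) T, (0:ℝ) < t + 2 - r := by
    intro r hr
    have := hr.2
    simp only [hT] at this ⊢
    linarith
  -- the auxiliary functions
  set w : ℝ → ℝ := fun r => (t + 2 - r) ^ s with hwdef
  set f : ℝ → ℝ := fun r => w r * (deriv φ r) ^ 2 * r ^ 2 with hfdef
  set g : ℝ → ℝ := fun r => w r * (φ r + r * deriv φ r) ^ 2 with hgdef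
  set h : ℝ → ℝ := fun r => w r * (φ r) ^ 2 with hhdef
  set F : ℝ → ℝ := fun r => -((t + 2 - r) ^ s * (r * (φ r) ^ 2)) with hFdef
  set F' : ℝ → ℝ := fun r =>
    s * (t + 2 - r) ^ (s - 1) * (r * (φ r) ^ 2)
      - (t + 2 - r) ^ s * ((φ r) ^ 2 + r * (2 * φ r * deriv φ r)) with hF'def
  -- continuity on Icc 0 T
  have hsub : Icc (0:ℝ) T ⊆ {r | (0:ℝ) < t + 2 - r} := fun r hr => hw r hr
  have hwc : ContinuousOn w (Icc 0 T) := by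
    apply ContinuousOn.rpow_const
    · exact (continuous_const.sub continuous_id).continuousOn
    · intro r hr; exact Or.inl (ne_of_gt (hw r hr))
  have hKc : ContinuousOn (fun r => (t + 2 - r) ^ (s - 1)) (Icc 0 T) := by
    apply ContinuousOn.rpow_const
    · exact (continuous_const.sub continuous_id).continuousOn
    · intro r hr; exact Or.inl (ne_of_gt (hw r hr))
  have hfc : ContinuousOn f (Icc 0 T) :=
    (hwc.mul ((hφ'.pow 2).continuousOn)).mul (continuous_pow 2).continuousOn
  have hgc : ContinuousOn g (Icc 0 T) :=
    hwc.mul (((hφ.continuous.add (continuous_id.mul hφ')).pow 2).continuousOn)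
  have hhc : ContinuousOn h (Icc 0 T) := hwc.mul ((hφ.continuous.pow 2).continuousOn)
  have hF'c : ContinuousOn F' (Icc 0 T) := by
    apply ContinuousOn.sub
    · exact ((continuousOn_const.mul hKc).mul
        ((continuous_id.mul (hφ.continuous.pow 2)).continuousOn))
    · exact hwc.mul (((hφ.continuous.pow 2).add
        (continuous_id.mul ((continuous_const.mul hφ.continuous).mul hφ'))).continuousOn)
  have huIcc : uIcc (0:ℝ) T = Icc 0 T := uIcc_of_le hT0.le
  have hfint : IntervalIntegrable f volume 0 T := (huIcc ▸ hfc).intervalIntegrable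
  have hgint : IntervalIntegrable g volume 0 T := (huIcc ▸ hgc).intervalIntegrable
  have hhint : IntervalIntegrable h volume 0 T := (huIcc ▸ hhc).intervalIntegrable
  have hF'int : IntervalIntegrable F' volume 0 T := (huIcc ▸ hF'c).intervalIntegrable
  -- FTC : ∫ F' = 0
  have hFTC : ∫ r in (0:ℝ)..T, F' r = 0 := by
    have hder : ∀ x ∈ uIcc (0:ℝ) T, HasDerivAt F (F' x) x := by
      intro x hx
      rw [huIcc] at hx
      have h1 : HasDerivAt (fun r : ℝ => t + 2 - r) (-1) x := by
        simpa using (hasDerivAt_id x).const_sub (t + 2)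
      have h2 : HasDerivAt (fun r : ℝ => (t + 2 - r) ^ s)
          ((-1) * s * (t + 2 - x) ^ (s - 1)) x :=
        h1.rpow_const (Or.inl (ne_of_gt (hw x hx)))
      have h3 : HasDerivAt (fun r : ℝ => φ r ^ 2)
          ((2:ℕ) * φ x ^ (2 - 1) * deriv φ x) x := ((hφd x).hasDerivAt).pow 2
      have h4 : HasDerivAt (fun r : ℝ => r * φ r ^ 2)
          (1 * φ x ^ 2 + x * ((2:ℕ) * φ x ^ (2 - 1) * deriv φ x)) x :=
        (hasDerivAt_id x).mul h3
      have h5 := (h2.mul h4).neg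
      refine h5.congr_deriv ?_
      simp only [hF'def]
      push_cast
      ring
    rw [intervalIntegral.integral_eq_sub_of_hasDerivAt hder hF'int]
    have hφT : φ T = 0 := h0 T le_rfl
    simp [hFdef, hφT]
  -- pointwise inequalities on Icc 0 T
  have hpt1 : ∀ r ∈ Icc (0:ℝ) T, f r ≤ 2 * g r + 2 * h r := by
    intro r hr
    have hwpos : 0 ≤ w r := (rpow_pos_of_pos (hw r hr) s).le
    simp only [hfdef, hgdef, hhdef]
    nlinarith [mul_nonneg hwpos (sq_nonneg (2 * φ r + r * deriv φ r))]
  have hpt2 : ∀ r ∈ Icc (0:ℝ) T, h r ≤ F' r + 2 * g r + h r / 2 := by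
    intro r hr
    have hb := hw r hr
    have hwpos : 0 ≤ w r := (rpow_pos_of_pos hb s).le
    have hKpos : 0 ≤ (t + 2 - r) ^ (s - 1) := (rpow_pos_of_pos hb (s - 1)).le
    have hr0 : 0 ≤ r := hr.1
    simp only [hhdef, hF'def, hgdef, hwdef]
    nlinarith [mul_nonneg (rpow_pos_of_pos hb s).le (sq_nonneg (φ r + 2 * r * deriv φ r)),
      mul_nonneg (mul_nonneg (mul_nonneg hs.le hKpos) hr0) (sq_nonneg (φ r))]
  -- interval integral inequalities
  have hint1 : (∫ r in (0:ℝ)..T, f r) ≤ 2 * (∫ r in (0:ℝ)..T, g r) + 2 * (∫ r in (0:ℝ)..T, h r) := by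
    have := intervalIntegral.integral_mono_on hT0.le hfint
      (((hgint.const_mul 2)).add ((hhint.const_mul 2))) (fun x hx => hpt1 x hx)
    rw [intervalIntegral.integral_add (hgint.const_mul 2) (hhint.const_mul 2),
      intervalIntegral.integral_const_mul, intervalIntegral.integral_const_mul] at this
    linarith
  have hint2 : (∫ r in (0:ℝ)..T, h r) ≤ 4 * (∫ r in (0:ℝ)..T, g r) := by
    have hrhsint : IntervalIntegrable (fun r => F' r + 2 * g r + h r / 2) volume 0 T :=
      (hF'int.add (hgint.const_mul 2)).add (hhint.div_const 2)
    have := intervalIntegral.integral_mono_on hT0.le hhint hrhsint (fun x hx => hpt2 x hx)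
    rw [intervalIntegral.integral_add (hF'int.add (hgint.const_mul 2)) (hhint.div_const 2),
      intervalIntegral.integral_add hF'int (hgint.const_mul 2),
      intervalIntegral.integral_const_mul, intervalIntegral.integral_div, hFTC] at this
    linarith
  -- zero on the tail
  have hf0 : ∀ x ∈ Ioi T, f x = 0 := by
    intro x hx; simp [hfdef, hd0 x hx.le]
  have hf20 : ∀ x ∈ Ioi T, w x * (deriv φ x + φ x / x) ^ 2 * x ^ 2 = 0 := by
    intro x hx; simp [hwdef, hd0 x hx.le, h0 x hx.le]
  have hLHS : (∫ r in Ioi (0:ℝ), f r) = ∫ r in (0:ℝ)..T, f r := by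
    rw [intervalIntegral.integral_of_le hT0.le, ← Ioc_union_Ioi_eq_Ioi hT0.le,
      setIntegral_union (Ioc_disjoint_Ioi le_rfl) measurableSet_Ioi hfint.1
        ((integrableOn_zero).congr_fun (fun x hx => (hf0 x hx).symm) measurableSet_Ioi),
      setIntegral_eq_zero_of_forall_eq_zero hf0, add_zero]
  have hEq : EqOn (fun r => w r * (deriv φ r + φ r / r) ^ 2 * r ^ 2) g (Ioc 0 T) := by
    intro x hx
    have hx0 : x ≠ 0 := ne_of_gt hx.1
    have key : (deriv φ x + φ x / x) * x = φ x + x * deriv φ x := by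
      field_simp
      ring
    simp only [hgdef]
    calc w x * (deriv φ x + φ x / x) ^ 2 * x ^ 2
        = w x * ((deriv φ x + φ x / x) * x) ^ 2 := by ring
      _ = w x * (φ x + x * deriv φ x) ^ 2 := by rw [key]
  have hRHS : (∫ r in Ioi (0:ℝ), w r * (deriv φ r + φ r / r) ^ 2 * r ^ 2)
      = ∫ r in (0:ℝ)..T, g r := by
    rw [intervalIntegral.integral_of_le hT0.le, ← Ioc_union_Ioi_eq_Ioi hT0.le,
      setIntegral_union (Ioc_disjoint_Ioi le_rfl) measurableSet_Ioi
        (hgint.1.congr_fun hEq.symm measurableSet_Ioc)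
        ((integrableOn_zero).congr_fun (fun x hx => (hf20 x hx).symm) measurableSet_Ioi),
      setIntegral_eq_zero_of_forall_eq_zero hf20, add_zero,
      setIntegral_congr_fun measurableSet_Ioc hEq]
  rw [hLHS, hRHS]
  linarith [hint1, hint2]
end

section
/- Let t ≥ 0 and 1 < s < 2, and let φ : ℝ³ → ℝ be a smooth function with supp φ ⊂ {|x| ≤ t+1}. Then there is a constant C = C(s) > 0 such that for every r > 0, r^{1/2} (t+2−r)^{s/2} ( ∫_{S²} φ(rω)² dω )^{1/2} ≤ C ( ‖(t+2−|x|)^{s/2} ∂_rφ‖_{L²(ℝ³)} + ‖(t+2−|x|)^{s/2} (φ/|x|)‖_{L²(ℝ³)} ), where ∂_rφ(x) = (x/|x|)·∇φ(x). -/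
open MeasureTheory Real Set Metric intervalIntegral
open scoped ENNReal

noncomputable section

local notation "E3" => EuclideanSpace ℝ (Fin 3)

/-- Radial derivative `∂_r φ (x) = (x/|x|) · ∇φ(x)`. -/
def radialDeriv (f : EuclideanSpace ℝ (Fin 3) → ℝ) (x : EuclideanSpace ℝ (Fin 3)) : ℝ :=
  fderiv ℝ f x (‖x‖⁻¹ • x)

/-- The surface measure `dω` on the unit sphere `S² ⊂ ℝ³`. -/
def sphereMeasure : Measure (sphere (0 : EuclideanSpace ℝ (Fin 3)) 1) :=
  (volume : Measure (EuclideanSpace ℝ (Fin 3))).toSphere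

instance : IsFiniteMeasure sphereMeasure := by unfold sphereMeasure; infer_instance

lemma perRay (s t r : ℝ) (hs : 0 < s) (ht : 0 ≤ t) (hr : 0 < r) (hr2 : r ≤ t + 1)
    (g D : ℝ → ℝ) (hgD : ∀ ρ, HasDerivAt g (D ρ) ρ) (hD : Continuous D)
    (hgtop : ∀ ρ, t + 1 < ρ → g ρ = 0) :
    r * ((t + 2 - r) ^ s * (g r) ^ 2) ≤
      ∫ ρ in (0:ℝ)..(t+1), (2 * (ρ ^ 2 * (t + 2 - ρ) ^ s * (D ρ) ^ 2)
        + 3 * ((t + 2 - ρ) ^ s * (g ρ) ^ 2)) := by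
  have hg : Continuous g := by
    rw [continuous_iff_continuousAt]; exact fun ρ => (hgD ρ).continuousAt
  have ht1 : (0:ℝ) ≤ t + 1 := by linarith
  -- continuity of the weights on Icc 0 (t+1)
  have hbase : ∀ ρ ∈ Icc (0:ℝ) (t+1), (0:ℝ) < t + 2 - ρ := fun ρ hρ => by
    have := hρ.2; linarith
  have hcw : ContinuousOn (fun ρ : ℝ => (t + 2 - ρ) ^ s) (Icc 0 (t+1)) :=
    ((continuous_const.sub continuous_id).continuousOn).rpow_const
      (fun ρ hρ => Or.inl (hbase ρ hρ).ne')
  have hcw1 : ContinuousOn (fun ρ : ℝ => (t + 2 - ρ) ^ (s - 1)) (Icc 0 (t+1)) :=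
    ((continuous_const.sub continuous_id).continuousOn).rpow_const
      (fun ρ hρ => Or.inl (hbase ρ hρ).ne')
  -- derivative of the weight
  have hw : ∀ ρ, ρ ≤ t + 1 → HasDerivAt (fun x : ℝ => (t + 2 - x) ^ s)
      (-1 * s * (t + 2 - ρ) ^ (s - 1)) ρ := by
    intro ρ hρ
    have h0 : HasDerivAt (fun x : ℝ => t + 2 - x) (-1) ρ := by
      simpa using ((hasDerivAt_id ρ).const_sub (t + 2))
    exact h0.rpow_const (Or.inl (show (0:ℝ) < t + 2 - ρ by linarith).ne')
  -- derivative of W := weight * g²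
  set Wd : ℝ → ℝ := fun ρ => -1 * s * (t + 2 - ρ) ^ (s - 1) * (g ρ) ^ 2
      + (t + 2 - ρ) ^ s * ((2:ℕ) * g ρ ^ 1 * D ρ) with hWd
  have hW : ∀ ρ, ρ ≤ t + 1 →
      HasDerivAt (fun x : ℝ => (t + 2 - x) ^ s * (g x) ^ 2) (Wd ρ) ρ := by
    intro ρ hρ
    exact (hw ρ hρ).mul ((hgD ρ).pow 2)
  -- derivative of V := ρ * W
  set Vd : ℝ → ℝ := fun ρ => 1 * ((t + 2 - ρ) ^ s * (g ρ) ^ 2) + ρ * Wd ρ with hVd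
  have hV : ∀ ρ, ρ ≤ t + 1 →
      HasDerivAt (fun x : ℝ => x * ((t + 2 - x) ^ s * (g x) ^ 2)) (Vd ρ) ρ := by
    intro ρ hρ
    exact (hasDerivAt_id ρ).mul (hW ρ hρ)
  -- g (t+1) = 0
  have hgt1 : g (t + 1) = 0 := by
    have h1 : Filter.Tendsto g (nhdsWithin (t+1) (Ioi (t+1))) (nhds (g (t+1))) :=
      (hg.tendsto _).mono_left nhdsWithin_le_nhds
    have h2 : Filter.Tendsto g (nhdsWithin (t+1) (Ioi (t+1))) (nhds 0) := by
      apply Filter.Tendsto.congr' _ tendsto_const_nhds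
      filter_upwards [self_mem_nhdsWithin] with x hx
      exact (hgtop x hx).symm
    exact tendsto_nhds_unique h1 h2
  -- interval integrability of everything continuous on Icc 0 (t+1)
  have hsub1 : uIcc r (t+1) ⊆ Icc 0 (t+1) := by
    rw [uIcc_of_le hr2]; exact Icc_subset_Icc (le_of_lt hr) le_rfl
  have hsub2 : uIcc (0:ℝ) r ⊆ Icc 0 (t+1) := by
    rw [uIcc_of_le hr.le]; exact Icc_subset_Icc le_rfl hr2
  have hsub3 : uIcc (0:ℝ) (t+1) ⊆ Icc 0 (t+1) := by rw [uIcc_of_le ht1]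
  have hcWd : ContinuousOn Wd (Icc 0 (t+1)) := by
    apply ContinuousOn.add
    · exact (continuousOn_const.mul hcw1).mul (hg.continuousOn.pow 2)
    · exact hcw.mul (((continuousOn_const.mul (hg.continuousOn.pow 1))).mul hD.continuousOn)
  have hcVd : ContinuousOn Vd (Icc 0 (t+1)) := by
    apply ContinuousOn.add
    · exact continuousOn_const.mul (hcw.mul (hg.continuousOn.pow 2))
    · exact continuousOn_id.mul hcWd
  -- FTC for W on [r, t+1]
  have ftcW : ∫ ρ in r..(t+1), Wd ρ = 0 - (t + 2 - r) ^ s * (g r) ^ 2 := by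
    have := integral_eq_sub_of_hasDerivAt (f := fun x : ℝ => (t + 2 - x) ^ s * (g x) ^ 2)
      (f' := Wd) (a := r) (b := t+1)
      (fun ρ hρ => hW ρ (hsub1 hρ).2) ((hcWd.mono hsub1).intervalIntegrable)
    rw [this]; rw [hgt1]; ring
  -- FTC for V on [0, t+1]
  have ftcV : ∫ ρ in (0:ℝ)..(t+1), Vd ρ = 0 := by
    have := integral_eq_sub_of_hasDerivAt (f := fun x : ℝ => x * ((t + 2 - x) ^ s * (g x) ^ 2))
      (f' := Vd) (a := 0) (b := t+1)
      (fun ρ hρ => hV ρ (hsub3 hρ).2) ((hcVd.mono hsub3).intervalIntegrable)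
    rw [this]; rw [hgt1]; ring
  -- named integrands
  set f1 : ℝ → ℝ := fun ρ => ρ * (s * (t + 2 - ρ) ^ (s - 1) * (g ρ) ^ 2) with hf1
  set f2 : ℝ → ℝ := fun ρ => (t + 2 - ρ) ^ s * (g ρ) ^ 2 with hf2
  set f3 : ℝ → ℝ := fun ρ => ρ * ((t + 2 - ρ) ^ s * (2 * g ρ * D ρ)) with hf3
  set f4 : ℝ → ℝ := fun ρ => ρ * |(t + 2 - ρ) ^ s * (2 * g ρ * D ρ)| with hf4
  set f5 : ℝ → ℝ := fun ρ => ρ ^ 2 * (t + 2 - ρ) ^ s * (D ρ) ^ 2 with hf5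
  have hcf1 : ContinuousOn f1 (Icc 0 (t+1)) :=
    continuous_id.continuousOn.mul ((continuousOn_const.mul hcw1).mul (hg.continuousOn.pow 2))
  have hcf2 : ContinuousOn f2 (Icc 0 (t+1)) := hcw.mul (hg.continuousOn.pow 2)
  have hcf3 : ContinuousOn f3 (Icc 0 (t+1)) :=
    continuous_id.continuousOn.mul (hcw.mul ((continuousOn_const.mul hg.continuousOn).mul
      hD.continuousOn))
  have hcf4 : ContinuousOn f4 (Icc 0 (t+1)) :=
    continuous_id.continuousOn.mul (hcw.mul ((continuousOn_const.mul hg.continuousOn).mul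
      hD.continuousOn)).abs
  have hcf5 : ContinuousOn f5 (Icc 0 (t+1)) :=
    ((continuous_id.continuousOn.pow 2).mul hcw).mul (hD.continuousOn.pow 2)
  have hii : ∀ (f : ℝ → ℝ), ContinuousOn f (Icc 0 (t+1)) → ∀ a b : ℝ,
      uIcc a b ⊆ Icc 0 (t+1) → IntervalIntegrable f volume a b :=
    fun f hf a b hsub => (hf.mono hsub).intervalIntegrable
  -- nonnegativity of the weight
  have hw0 : ∀ ρ ∈ Icc (0:ℝ) (t+1), (0:ℝ) ≤ (t + 2 - ρ) ^ s :=
    fun ρ hρ => Real.rpow_nonneg (hbase ρ hρ).le _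
  have hw10 : ∀ ρ ∈ Icc (0:ℝ) (t+1), (0:ℝ) ≤ (t + 2 - ρ) ^ (s - 1) :=
    fun ρ hρ => Real.rpow_nonneg (hbase ρ hρ).le _
  -- Step (a): FTC identity for the boundary term
  have ha : r * ((t + 2 - r) ^ s * (g r) ^ 2)
      = ∫ ρ in r..(t+1), r * (s * (t + 2 - ρ) ^ (s - 1) * (g ρ) ^ 2
          - (t + 2 - ρ) ^ s * (2 * g ρ * D ρ)) := by
    have he : (fun ρ => r * (s * (t + 2 - ρ) ^ (s - 1) * (g ρ) ^ 2
        - (t + 2 - ρ) ^ s * (2 * g ρ * D ρ))) = fun ρ => r * (-1 * Wd ρ) := by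
      funext ρ; simp only [hWd]; push_cast; ring
    rw [he, intervalIntegral.integral_const_mul]
    have : (fun ρ => -1 * Wd ρ) = fun ρ => (-1 : ℝ) * Wd ρ := rfl
    rw [this, intervalIntegral.integral_const_mul, ftcW]; ring
  -- Step (b): bound by f1 + f4 on [r, t+1]
  have hb : (∫ ρ in r..(t+1), r * (s * (t + 2 - ρ) ^ (s - 1) * (g ρ) ^ 2
        - (t + 2 - ρ) ^ s * (2 * g ρ * D ρ)))
      ≤ ∫ ρ in r..(t+1), (f1 ρ + f4 ρ) := by
    apply integral_mono_on hr2
    · apply IntervalIntegrable.const_mul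
      apply IntervalIntegrable.sub
      · exact hii _ ((continuousOn_const.mul hcw1).mul (hg.continuousOn.pow 2)) _ _ hsub1
      · exact hii _ (hcw.mul ((continuousOn_const.mul hg.continuousOn).mul hD.continuousOn)) _ _
          hsub1
    · exact (hii _ hcf1 _ _ hsub1).add (hii _ hcf4 _ _ hsub1)
    · intro ρ hρ
      have hρK : ρ ∈ Icc (0:ℝ) (t+1) := ⟨le_trans hr.le hρ.1, hρ.2⟩
      have ha0 : (0:ℝ) ≤ s * (t + 2 - ρ) ^ (s - 1) * (g ρ) ^ 2 :=
        mul_nonneg (mul_nonneg hs.le (hw10 ρ hρK)) (sq_nonneg _)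
      have hb1 : -((t + 2 - ρ) ^ s * (2 * g ρ * D ρ))
          ≤ |(t + 2 - ρ) ^ s * (2 * g ρ * D ρ)| := neg_le_abs _
      have habs0 : (0:ℝ) ≤ |(t + 2 - ρ) ^ s * (2 * g ρ * D ρ)| := abs_nonneg _
      have hrρ : r ≤ ρ := hρ.1
      simp only [hf1, hf4]
      nlinarith [mul_nonneg (sub_nonneg.2 hrρ) ha0, mul_nonneg (sub_nonneg.2 hrρ) habs0,
        mul_le_mul_of_nonneg_left hb1 hr.le]
  -- Step (c): extend to [0, t+1]
  have hc : (∫ ρ in r..(t+1), (f1 ρ + f4 ρ)) ≤ ∫ ρ in (0:ℝ)..(t+1), (f1 ρ + f4 ρ) := by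
    have hsplit : (∫ ρ in (0:ℝ)..r, (f1 ρ + f4 ρ)) + (∫ ρ in r..(t+1), (f1 ρ + f4 ρ))
        = ∫ ρ in (0:ℝ)..(t+1), (f1 ρ + f4 ρ) :=
      integral_add_adjacent_intervals
        ((hii _ hcf1 _ _ hsub2).add (hii _ hcf4 _ _ hsub2))
        ((hii _ hcf1 _ _ hsub1).add (hii _ hcf4 _ _ hsub1))
    have hnn : (0:ℝ) ≤ ∫ ρ in (0:ℝ)..r, (f1 ρ + f4 ρ) := by
      apply integral_nonneg hr.le
      intro ρ hρ
      have hρK : ρ ∈ Icc (0:ℝ) (t+1) := ⟨hρ.1, le_trans hρ.2 hr2⟩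
      have := hw10 ρ hρK
      have h4 : (0:ℝ) ≤ f4 ρ := mul_nonneg hρ.1 (abs_nonneg _)
      have h1 : (0:ℝ) ≤ f1 ρ :=
        mul_nonneg hρ.1 (mul_nonneg (mul_nonneg hs.le this) (sq_nonneg _))
      linarith
    linarith
  -- Step (d): split
  have hd : (∫ ρ in (0:ℝ)..(t+1), (f1 ρ + f4 ρ))
      = (∫ ρ in (0:ℝ)..(t+1), f1 ρ) + ∫ ρ in (0:ℝ)..(t+1), f4 ρ :=
    integral_add (hii _ hcf1 _ _ hsub3) (hii _ hcf4 _ _ hsub3)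
  -- Step (e): IBP identity I1 = I2 + I3
  have he : (∫ ρ in (0:ℝ)..(t+1), f1 ρ)
      = (∫ ρ in (0:ℝ)..(t+1), f2 ρ) + ∫ ρ in (0:ℝ)..(t+1), f3 ρ := by
    have hpt : (fun ρ => f1 ρ + Vd ρ) = fun ρ => f2 ρ + f3 ρ := by
      funext ρ; simp only [hf1, hf2, hf3, hVd, hWd]; push_cast; ring
    have h1 : (∫ ρ in (0:ℝ)..(t+1), (f1 ρ + Vd ρ))
        = (∫ ρ in (0:ℝ)..(t+1), f1 ρ) + ∫ ρ in (0:ℝ)..(t+1), Vd ρ :=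
      integral_add (hii _ hcf1 _ _ hsub3) (hii _ hcVd _ _ hsub3)
    have h2 : (∫ ρ in (0:ℝ)..(t+1), (f2 ρ + f3 ρ))
        = (∫ ρ in (0:ℝ)..(t+1), f2 ρ) + ∫ ρ in (0:ℝ)..(t+1), f3 ρ :=
      integral_add (hii _ hcf2 _ _ hsub3) (hii _ hcf3 _ _ hsub3)
    have h3 : (∫ ρ in (0:ℝ)..(t+1), (f1 ρ + Vd ρ)) = ∫ ρ in (0:ℝ)..(t+1), (f2 ρ + f3 ρ) := by
      rw [hpt]
    rw [h1, ftcV] at h3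
    linarith [h2, h3]
  -- Step (f): I3 ≤ I4
  have hf : (∫ ρ in (0:ℝ)..(t+1), f3 ρ) ≤ ∫ ρ in (0:ℝ)..(t+1), f4 ρ := by
    apply integral_mono_on ht1 (hii _ hcf3 _ _ hsub3) (hii _ hcf4 _ _ hsub3)
    intro ρ hρ
    exact mul_le_mul_of_nonneg_left (le_abs_self _) hρ.1
  -- Step (g): I4 ≤ I5 + I2
  have hgg : (∫ ρ in (0:ℝ)..(t+1), f4 ρ)
      ≤ ∫ ρ in (0:ℝ)..(t+1), (f5 ρ + f2 ρ) := by
    apply integral_mono_on ht1 (hii _ hcf4 _ _ hsub3)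
      ((hii _ hcf5 _ _ hsub3).add (hii _ hcf2 _ _ hsub3))
    intro ρ hρ
    have hwρ : (0:ℝ) ≤ (t + 2 - ρ) ^ s := hw0 ρ hρ
    have habs : |(t + 2 - ρ) ^ s * (2 * g ρ * D ρ)|
        = (t + 2 - ρ) ^ s * (2 * |g ρ * D ρ|) := by
      rw [abs_mul, abs_of_nonneg hwρ, show (2:ℝ) * g ρ * D ρ = 2 * (g ρ * D ρ) by ring,
        abs_mul, abs_two]
    simp only [hf4, hf5, hf2, habs]
    rcases abs_cases (g ρ * D ρ) with ⟨h1, _⟩ | ⟨h1, _⟩ <;>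
      nlinarith [mul_nonneg hwρ (sq_nonneg (ρ * D ρ - g ρ)),
        mul_nonneg hwρ (sq_nonneg (ρ * D ρ + g ρ)), hρ.1,
        mul_nonneg hρ.1 hwρ]
  -- finish
  have hfin : (∫ ρ in (0:ℝ)..(t+1), (2 * (ρ ^ 2 * (t + 2 - ρ) ^ s * (D ρ) ^ 2)
        + 3 * ((t + 2 - ρ) ^ s * (g ρ) ^ 2)))
      = 2 * (∫ ρ in (0:ℝ)..(t+1), f5 ρ) + 3 * ∫ ρ in (0:ℝ)..(t+1), f2 ρ := by
    rw [← intervalIntegral.integral_const_mul, ← intervalIntegral.integral_const_mul, ← integral_add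
      ((hii _ hcf5 _ _ hsub3).const_mul 2) ((hii _ hcf2 _ _ hsub3).const_mul 3)]
  have hsplit5 : (∫ ρ in (0:ℝ)..(t+1), (f5 ρ + f2 ρ))
      = (∫ ρ in (0:ℝ)..(t+1), f5 ρ) + ∫ ρ in (0:ℝ)..(t+1), f2 ρ :=
    integral_add (hii _ hcf5 _ _ hsub3) (hii _ hcf2 _ _ hsub3)
  rw [hfin]
  rw [hsplit5] at hgg
  linarith [ha, hb, hc, hd, he, hf, hgg]

lemma polar_lintegral (f : E3 → ℝ≥0∞) (hf : Measurable f) :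
    ∫⁻ x, f x = ∫⁻ ω : sphere (0 : E3) 1,
      (∫⁻ ρ in Ioi (0:ℝ), ENNReal.ofReal (ρ^2) * f (ρ • (ω : E3))) ∂sphereMeasure := by
  have hdim : Module.finrank ℝ E3 = 3 := by simp
  have h1 : ∫⁻ x, f x = ∫⁻ x : ({0}ᶜ : Set E3), f x ∂((volume : Measure E3).comap (↑)) := by
    rw [MeasureTheory.lintegral_subtype_comap (measurableSet_singleton (0:E3)).compl,
      MeasureTheory.restrict_compl_singleton]
  have hmp := (volume : Measure E3).measurePreserving_homeomorphUnitSphereProd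
  rw [hdim] at hmp
  have hg : Measurable fun p : sphere (0:E3) 1 × Ioi (0:ℝ) => f ((p.2 : ℝ) • (p.1 : E3)) := by
    apply hf.comp
    fun_prop
  have h2 : ∫⁻ x : ({0}ᶜ : Set E3), f x ∂((volume : Measure E3).comap (↑))
      = ∫⁻ p : sphere (0:E3) 1 × Ioi (0:ℝ), f ((p.2 : ℝ) • (p.1 : E3))
          ∂((volume : Measure E3).toSphere.prod (.volumeIoiPow 2)) := by
    rw [← hmp.lintegral_comp hg]
    apply lintegral_congr
    intro x
    congr 1
    exact congrArg Subtype.val ((homeomorphUnitSphereProd E3).left_inv x) |>.symm ▸ rfl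
  rw [h1, h2, lintegral_prod _ hg.aemeasurable]
  refine lintegral_congr fun ω => ?_
  rw [Measure.volumeIoiPow,
    lintegral_withDensity_eq_lintegral_mul _ (by fun_prop) (by fun_prop)]
  simp only [Pi.mul_apply]
  exact MeasureTheory.lintegral_subtype_comap measurableSet_Ioi
    (fun ρ : ℝ => ENNReal.ofReal (ρ ^ 2) * f (ρ • (ω : E3)))

set_option maxHeartbeats 2000000 in
/-- **Inequality (sobolevinq1), Case 1 of Theorem 3.2**: weighted trace estimate with weight `r^{1/2}(t+2-r)^{s/2}`, for smooth functions
supported in `{|x| ≤ t+1}`, with a constant depending only on `s`. -/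
theorem weighted_trace_estimate_case1 (s : ℝ) (hs1 : 1 < s) (hs2 : s < 2) :
    ∃ C : ℝ, 0 < C ∧ ∀ (t : ℝ), 0 ≤ t →
      ∀ φ : EuclideanSpace ℝ (Fin 3) → ℝ, ContDiff ℝ (⊤ : ℕ∞) φ →
        (∀ x, t + 1 < ‖x‖ → φ x = 0) →
        ∀ r : ℝ, 0 < r →
        r ^ ((1:ℝ)/2) * (t + 2 - r) ^ (s / 2) *
            Real.sqrt (∫ ω : sphere (0 : EuclideanSpace ℝ (Fin 3)) 1,
              (φ (r • (ω : EuclideanSpace ℝ (Fin 3)))) ^ 2 ∂sphereMeasure)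
          ≤ C * (Real.sqrt (∫ x : EuclideanSpace ℝ (Fin 3),
                ((t + 2 - ‖x‖) ^ (s / 2) * radialDeriv φ x) ^ 2)
              + Real.sqrt (∫ x : EuclideanSpace ℝ (Fin 3),
                ((t + 2 - ‖x‖) ^ (s / 2) * (φ x / ‖x‖)) ^ 2)) := by
  refine ⟨2, two_pos, ?_⟩
  intro t ht φ hφ hsupp r hr
  set H1 : E3 → ℝ := fun x => ((t + 2 - ‖x‖) ^ (s / 2) * radialDeriv φ x) ^ 2 with hH1def
  set H2 : E3 → ℝ := fun x => ((t + 2 - ‖x‖) ^ (s / 2) * (φ x / ‖x‖)) ^ 2 with hH2def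
  have hP1nn : (0:ℝ) ≤ ∫ x, H1 x := integral_nonneg fun x => sq_nonneg _
  have hP2nn : (0:ℝ) ≤ ∫ x, H2 x := integral_nonneg fun x => sq_nonneg _
  have hRHSnn : (0:ℝ) ≤ 2 * (Real.sqrt (∫ x, H1 x) + Real.sqrt (∫ x, H2 x)) := by
    positivity
  by_cases hcase : r ≤ t + 1
  swap
  · -- r > t+1 : the sphere integral vanishes
    push_neg at hcase
    have hz : ∀ ω : sphere (0:E3) 1, φ (r • (ω : E3)) = 0 := by
      intro ω
      apply hsupp
      rw [norm_smul, mem_sphere_zero_iff_norm.mp ω.2, Real.norm_eq_abs, abs_of_pos hr]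
      simpa using hcase
    calc r ^ ((1:ℝ)/2) * (t + 2 - r) ^ (s / 2) *
        Real.sqrt (∫ ω : sphere (0:E3) 1, (φ (r • (ω : E3))) ^ 2 ∂sphereMeasure)
        = 0 := by simp [hz]
      _ ≤ _ := hRHSnn
  -- main case : 0 < r ≤ t+1
  have hs0 : (0:ℝ) < s := by linarith
  have ht1 : (0:ℝ) ≤ t + 1 := by linarith
  have hω1 : ∀ ω : sphere (0:E3) 1, ‖(ω : E3)‖ = 1 :=
    fun ω => mem_sphere_zero_iff_norm.mp ω.2
  have hnorm : ∀ (ω : sphere (0:E3) 1) (ρ : ℝ), 0 ≤ ρ → ‖ρ • (ω : E3)‖ = ρ := by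
    intro ω ρ hρ; rw [norm_smul, hω1 ω, Real.norm_eq_abs, abs_of_nonneg hρ, mul_one]
  -- squaring helper for rpow
  have hsq : ∀ a : ℝ, 0 ≤ a → (a ^ (s/2)) ^ 2 = a ^ s := by
    intro a ha
    rw [← Real.rpow_natCast (a ^ (s/2)) 2, ← Real.rpow_mul ha]
    norm_num
  -- derivative of φ along rays
  have hfdcont : Continuous (fderiv ℝ φ) := hφ.continuous_fderiv (by simp)
  set D : sphere (0:E3) 1 → ℝ → ℝ :=
    fun ω ρ => (fderiv ℝ φ (ρ • (ω : E3))) (ω : E3) with hDdef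
  have hDcont : ∀ ω, Continuous (D ω) := by
    intro ω
    exact (hfdcont.comp (continuous_id.smul continuous_const)).clm_apply continuous_const
  have hgD : ∀ (ω : sphere (0:E3) 1) (ρ : ℝ),
      HasDerivAt (fun ρ : ℝ => φ (ρ • (ω : E3))) (D ω ρ) ρ := by
    intro ω ρ
    have h1 : HasDerivAt (fun ρ : ℝ => ρ • (ω : E3)) (ω : E3) ρ := by
      simpa using (hasDerivAt_id ρ).smul_const (ω : E3)
    exact ((hφ.differentiable (by simp) _).hasFDerivAt.comp_hasDerivAt ρ h1)
  -- vanishing beyond t+1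
  have hφz : ∀ (ω : sphere (0:E3) 1) (ρ : ℝ), t + 1 < ρ → φ (ρ • (ω : E3)) = 0 := by
    intro ω ρ hρ
    apply hsupp
    rw [hnorm ω ρ (by linarith)]; exact hρ
  have hfd0 : ∀ x : E3, t + 1 < ‖x‖ → fderiv ℝ φ x = 0 := by
    intro x hx
    have hopen : IsOpen {y : E3 | t + 1 < ‖y‖} := isOpen_lt continuous_const continuous_norm
    have hev : φ =ᶠ[nhds x] (fun _ => (0:ℝ)) := by
      filter_upwards [hopen.mem_nhds hx] with y hy
      exact hsupp y hy
    rw [hev.fderiv_eq]; simp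
  -- the per-ray estimate
  have hkey : ∀ ω : sphere (0:E3) 1,
      (r * (t + 2 - r) ^ s) * (φ (r • (ω : E3))) ^ 2 ≤
        ∫ ρ in (0:ℝ)..(t+1), (2 * (ρ ^ 2 * (t + 2 - ρ) ^ s * (D ω ρ) ^ 2)
          + 3 * ((t + 2 - ρ) ^ s * (φ (ρ • (ω : E3))) ^ 2)) := by
    intro ω
    have := perRay s t r hs0 ht hr hcase (fun ρ => φ (ρ • (ω : E3))) (D ω)
      (hgD ω) (hDcont ω) (hφz ω)
    calc (r * (t + 2 - r) ^ s) * (φ (r • (ω : E3))) ^ 2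
        = r * ((t + 2 - r) ^ s * (φ (r • (ω : E3))) ^ 2) := by ring
      _ ≤ _ := this
  -- continuity / measurability of the weights
  have hwcont : Continuous (fun a : ℝ => a ^ (s/2)) := Real.continuous_rpow_const (by positivity)
  have hwcont' : Continuous (fun a : ℝ => a ^ s) := Real.continuous_rpow_const hs0.le
  -- measurability of H1 and H2
  have hsm : Continuous fun p : sphere (0:E3) 1 × ℝ => p.2 • (p.1 : E3) :=
    continuous_snd.smul (continuous_subtype_val.comp continuous_fst)
  have hrdm : Measurable (radialDeriv φ) := by
    have h1 : Measurable fun x : E3 => (fderiv ℝ φ x, ‖x‖⁻¹ • x) :=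
      hfdcont.measurable.prodMk ((measurable_norm.inv).smul measurable_id)
    exact (isBoundedBilinearMap_apply.continuous.measurable).comp h1
  have mH1 : Measurable H1 := by
    apply Measurable.pow_const
    exact ((hwcont.comp (continuous_const.sub continuous_norm)).measurable).mul hrdm
  have mH2 : Measurable H2 := by
    apply Measurable.pow_const
    exact ((hwcont.comp (continuous_const.sub continuous_norm)).measurable).mul
      (hφ.continuous.measurable.div measurable_norm)
  -- global bounds on φ and its derivative
  obtain ⟨Mφ, hMφ0, hMφ⟩ : ∃ M : ℝ, 0 ≤ M ∧ ∀ x : E3, |φ x| ≤ M := by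
    obtain ⟨C, hC⟩ := (isCompact_closedBall (0:E3) (t+2)).exists_bound_of_continuousOn
      hφ.continuous.continuousOn
    refine ⟨max C 0, le_max_right _ _, fun x => ?_⟩
    by_cases hx : x ∈ closedBall (0:E3) (t+2)
    · exact le_trans (hC x hx) (le_max_left _ _)
    · rw [hsupp x (by simp only [mem_closedBall, dist_zero_right, not_le] at hx; linarith)]
      simp
  obtain ⟨MD, hMD0, hMD⟩ : ∃ M : ℝ, 0 ≤ M ∧ ∀ x : E3, ‖fderiv ℝ φ x‖ ≤ M := by
    obtain ⟨C, hC⟩ := (isCompact_closedBall (0:E3) (t+2)).exists_bound_of_continuousOn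
      hfdcont.continuousOn
    refine ⟨max C 0, le_max_right _ _, fun x => ?_⟩
    by_cases hx : x ∈ closedBall (0:E3) (t+2)
    · exact le_trans (hC x hx) (le_max_left _ _)
    · rw [hfd0 x (by simp only [mem_closedBall, dist_zero_right, not_le] at hx; linarith)]
      simp
  have hDbound : ∀ (ω : sphere (0:E3) 1) (ρ : ℝ), |D ω ρ| ≤ MD := by
    intro ω ρ
    calc |D ω ρ| = ‖(fderiv ℝ φ (ρ • (ω:E3))) (ω:E3)‖ := (Real.norm_eq_abs _).symm
      _ ≤ ‖fderiv ℝ φ (ρ • (ω:E3))‖ * ‖(ω:E3)‖ := ContinuousLinearMap.le_opNorm _ _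
      _ ≤ MD := by rw [hω1 ω, mul_one]; exact hMD _
  -- per-ray integrands
  set F5 : sphere (0:E3) 1 → ℝ → ℝ :=
    fun ω ρ => ρ ^ 2 * (t + 2 - ρ) ^ s * (D ω ρ) ^ 2 with hF5def
  set F2 : sphere (0:E3) 1 → ℝ → ℝ :=
    fun ω ρ => (t + 2 - ρ) ^ s * (φ (ρ • (ω : E3))) ^ 2 with hF2def
  -- pointwise identification on Ioc 0 (t+1)
  have hmatch1 : ∀ (ω : sphere (0:E3) 1), ∀ ρ ∈ Ioc (0:ℝ) (t+1),
      ρ ^ 2 * H1 (ρ • (ω : E3)) = F5 ω ρ := by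
    intro ω ρ hρ
    have hn : ‖ρ • (ω : E3)‖ = ρ := hnorm ω ρ hρ.1.le
    have hrd : radialDeriv φ (ρ • (ω : E3)) = D ω ρ := by
      unfold radialDeriv
      rw [hn, smul_smul, inv_mul_cancel₀ hρ.1.ne', one_smul]
    simp only [hH1def, hF5def, hn, hrd, mul_pow]
    rw [hsq (t + 2 - ρ) (by linarith [hρ.2])]
    ring
  have hmatch2 : ∀ (ω : sphere (0:E3) 1), ∀ ρ ∈ Ioc (0:ℝ) (t+1),
      ρ ^ 2 * H2 (ρ • (ω : E3)) = F2 ω ρ := by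
    intro ω ρ hρ
    have hn : ‖ρ • (ω : E3)‖ = ρ := hnorm ω ρ hρ.1.le
    have hρne : ρ ≠ 0 := hρ.1.ne'
    simp only [hH2def, hF2def, hn, mul_pow, div_pow]
    rw [hsq (t + 2 - ρ) (by linarith [hρ.2])]
    field_simp
  -- vanishing of H1, H2 along rays beyond t+1
  have hvanish1 : ∀ (ω : sphere (0:E3) 1), ∀ ρ ∈ Ioi (t+1), H1 (ρ • (ω : E3)) = 0 := by
    intro ω ρ hρ
    have hρpos : (0:ℝ) < ρ := lt_of_le_of_lt (by linarith) hρ.out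
    have hn : ‖ρ • (ω : E3)‖ = ρ := hnorm ω ρ hρpos.le
    have : radialDeriv φ (ρ • (ω : E3)) = 0 := by
      unfold radialDeriv
      rw [hfd0 _ (by rw [hn]; exact hρ.out)]
      rfl
    simp [hH1def, this]
  have hvanish2 : ∀ (ω : sphere (0:E3) 1), ∀ ρ ∈ Ioi (t+1), H2 (ρ • (ω : E3)) = 0 := by
    intro ω ρ hρ
    have hρpos : (0:ℝ) < ρ := lt_of_le_of_lt (by linarith) hρ.out
    have hn : ‖ρ • (ω : E3)‖ = ρ := hnorm ω ρ hρpos.le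
    have : φ (ρ • (ω : E3)) = 0 := hφz ω ρ hρ.out
    simp [hH2def, this]
  -- the inner radial lintegrals
  set A : sphere (0:E3) 1 → ℝ≥0∞ := fun ω =>
    ∫⁻ ρ in Ioi (0:ℝ), ENNReal.ofReal (ρ^2) * ENNReal.ofReal (H1 (ρ • (ω : E3))) with hAdef
  set B : sphere (0:E3) 1 → ℝ≥0∞ := fun ω =>
    ∫⁻ ρ in Ioi (0:ℝ), ENNReal.ofReal (ρ^2) * ENNReal.ofReal (H2 (ρ • (ω : E3))) with hBdef
  have hIocIoi : Ioc (0:ℝ) (t+1) ∪ Ioi (t+1) = Ioi 0 := Ioc_union_Ioi_eq_Ioi ht1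
  have hA_eq : ∀ ω, A ω = ∫⁻ ρ in Ioc (0:ℝ) (t+1), ENNReal.ofReal (F5 ω ρ) := by
    intro ω
    rw [hAdef]
    simp only []
    rw [← hIocIoi, lintegral_union measurableSet_Ioi (Ioc_disjoint_Ioi le_rfl)]
    have hz : ∫⁻ ρ in Ioi (t+1), ENNReal.ofReal (ρ^2) * ENNReal.ofReal (H1 (ρ • (ω : E3))) = 0 := by
      have hae : (fun ρ => ENNReal.ofReal (ρ^2) * ENNReal.ofReal (H1 (ρ • (ω : E3))))
          =ᵐ[volume.restrict (Ioi (t+1))] (fun _ => (0:ℝ≥0∞)) := by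
        filter_upwards [ae_restrict_mem measurableSet_Ioi] with ρ hρ
        simp [hvanish1 ω ρ hρ]
      rw [lintegral_congr_ae hae, lintegral_zero]
    rw [hz, add_zero]
    apply setLIntegral_congr_fun measurableSet_Ioc
    intro ρ hρ
    beta_reduce
    rw [← ENNReal.ofReal_mul (sq_nonneg ρ), hmatch1 ω ρ hρ]
  have hB_eq : ∀ ω, B ω = ∫⁻ ρ in Ioc (0:ℝ) (t+1), ENNReal.ofReal (F2 ω ρ) := by
    intro ω
    rw [hBdef]
    simp only []
    rw [← hIocIoi, lintegral_union measurableSet_Ioi (Ioc_disjoint_Ioi le_rfl)]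
    have hz : ∫⁻ ρ in Ioi (t+1), ENNReal.ofReal (ρ^2) * ENNReal.ofReal (H2 (ρ • (ω : E3))) = 0 := by
      have hae : (fun ρ => ENNReal.ofReal (ρ^2) * ENNReal.ofReal (H2 (ρ • (ω : E3))))
          =ᵐ[volume.restrict (Ioi (t+1))] (fun _ => (0:ℝ≥0∞)) := by
        filter_upwards [ae_restrict_mem measurableSet_Ioi] with ρ hρ
        simp [hvanish2 ω ρ hρ]
      rw [lintegral_congr_ae hae, lintegral_zero]
    rw [hz, add_zero]
    apply setLIntegral_congr_fun measurableSet_Ioc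
    intro ρ hρ
    beta_reduce
    rw [← ENNReal.ofReal_mul (sq_nonneg ρ), hmatch2 ω ρ hρ]
  -- uniform bounds on A and B
  have hAbd : ∀ ω, A ω ≤ ENNReal.ofReal ((t+1)^2 * (t+2)^s * MD^2) * ENNReal.ofReal (t+1) := by
    intro ω
    rw [hA_eq ω]
    calc ∫⁻ ρ in Ioc (0:ℝ) (t+1), ENNReal.ofReal (F5 ω ρ)
        ≤ ∫⁻ _ in Ioc (0:ℝ) (t+1), ENNReal.ofReal ((t+1)^2 * (t+2)^s * MD^2) := by
          apply setLIntegral_mono' measurableSet_Ioc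
          intro ρ hρ
          apply ENNReal.ofReal_le_ofReal
          have h1 : ρ^2 ≤ (t+1)^2 := by nlinarith [hρ.1, hρ.2]
          have h2 : (t+2-ρ) ^ s ≤ (t+2) ^ s :=
            Real.rpow_le_rpow (by linarith [hρ.2]) (by linarith [hρ.1]) hs0.le
          have h3 : (D ω ρ)^2 ≤ MD^2 := by
            nlinarith [hDbound ω ρ, abs_nonneg (D ω ρ), sq_abs (D ω ρ)]
          have hw : (0:ℝ) ≤ (t+2-ρ)^s := Real.rpow_nonneg (by linarith [hρ.2]) s
          have hw2 : (0:ℝ) ≤ (t+2)^s := Real.rpow_nonneg (by linarith) s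
          have hA : ρ^2*(t+2-ρ)^s ≤ (t+1)^2*(t+2)^s :=
            mul_le_mul h1 h2 hw (sq_nonneg _)
          exact mul_le_mul hA h3 (sq_nonneg _) (mul_nonneg (sq_nonneg _) hw2)
      _ = ENNReal.ofReal ((t+1)^2 * (t+2)^s * MD^2) * ENNReal.ofReal (t+1) := by
          rw [MeasureTheory.setLIntegral_const, Real.volume_Ioc]
          norm_num
  have hBbd : ∀ ω, B ω ≤ ENNReal.ofReal ((t+2)^s * Mφ^2) * ENNReal.ofReal (t+1) := by
    intro ω
    rw [hB_eq ω]
    calc ∫⁻ ρ in Ioc (0:ℝ) (t+1), ENNReal.ofReal (F2 ω ρ)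
        ≤ ∫⁻ _ in Ioc (0:ℝ) (t+1), ENNReal.ofReal ((t+2)^s * Mφ^2) := by
          apply setLIntegral_mono' measurableSet_Ioc
          intro ρ hρ
          apply ENNReal.ofReal_le_ofReal
          have h2 : (t+2-ρ) ^ s ≤ (t+2) ^ s :=
            Real.rpow_le_rpow (by linarith [hρ.2]) (by linarith [hρ.1]) hs0.le
          have h3 : (φ (ρ • (ω:E3)))^2 ≤ Mφ^2 := by
            nlinarith [hMφ (ρ • (ω:E3)), abs_nonneg (φ (ρ • (ω:E3))), sq_abs (φ (ρ • (ω:E3)))]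
          have hw : (0:ℝ) ≤ (t+2-ρ)^s := Real.rpow_nonneg (by linarith [hρ.2]) s
          have hw2 : (0:ℝ) ≤ (t+2)^s := Real.rpow_nonneg (by linarith) s
          exact mul_le_mul h2 h3 (sq_nonneg _) hw2
      _ = ENNReal.ofReal ((t+2)^s * Mφ^2) * ENNReal.ofReal (t+1) := by
          rw [MeasureTheory.setLIntegral_const, Real.volume_Ioc]
          norm_num
  -- polar coordinates
  have hpolar1 : ∫⁻ x : E3, ENNReal.ofReal (H1 x) = ∫⁻ ω, A ω ∂sphereMeasure :=
    polar_lintegral _ (ENNReal.measurable_ofReal.comp mH1)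
  have hpolar2 : ∫⁻ x : E3, ENNReal.ofReal (H2 x) = ∫⁻ ω, B ω ∂sphereMeasure :=
    polar_lintegral _ (ENNReal.measurable_ofReal.comp mH2)
  -- finiteness and integrability of H1, H2
  have hfin : ∀ (H : E3 → ℝ), Measurable H → (∀ x, 0 ≤ H x) →
      (∫⁻ x : E3, ENNReal.ofReal (H x)) ≠ ⊤ → Integrable H := by
    intro H hm hnn hfin
    refine ⟨hm.aestronglyMeasurable, ?_⟩
    rw [hasFiniteIntegral_iff_ofReal (ae_of_all _ hnn)]
    exact lt_top_iff_ne_top.mpr hfin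
  have hL1fin : (∫⁻ x : E3, ENNReal.ofReal (H1 x)) ≠ ⊤ := by
    rw [hpolar1]
    refine ne_top_of_le_ne_top ?_ (lintegral_mono hAbd)
    rw [lintegral_const]
    exact (ENNReal.mul_lt_top (ENNReal.mul_lt_top ENNReal.ofReal_lt_top ENNReal.ofReal_lt_top)
      (measure_lt_top _ _)).ne
  have hL2fin : (∫⁻ x : E3, ENNReal.ofReal (H2 x)) ≠ ⊤ := by
    rw [hpolar2]
    refine ne_top_of_le_ne_top ?_ (lintegral_mono hBbd)
    rw [lintegral_const]
    exact (ENNReal.mul_lt_top (ENNReal.mul_lt_top ENNReal.ofReal_lt_top ENNReal.ofReal_lt_top)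
      (measure_lt_top _ _)).ne
  have hInt1 : Integrable H1 := hfin H1 mH1 (fun x => sq_nonneg _) hL1fin
  have hInt2 : Integrable H2 := hfin H2 mH2 (fun x => sq_nonneg _) hL2fin
  have hofReal1 : ENNReal.ofReal (∫ x, H1 x) = ∫⁻ x : E3, ENNReal.ofReal (H1 x) :=
    ofReal_integral_eq_lintegral_ofReal hInt1 (ae_of_all _ fun x => sq_nonneg _)
  have hofReal2 : ENNReal.ofReal (∫ x, H2 x) = ∫⁻ x : E3, ENNReal.ofReal (H2 x) :=
    ofReal_integral_eq_lintegral_ofReal hInt2 (ae_of_all _ fun x => sq_nonneg _)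
  -- measurability of A and B
  have mAB : ∀ (H : E3 → ℝ), Measurable H → Measurable (fun ω : sphere (0:E3) 1 =>
      ∫⁻ ρ in Ioi (0:ℝ), ENNReal.ofReal (ρ^2) * ENNReal.ofReal (H (ρ • (ω : E3)))) := by
    intro H hm
    have hf : Measurable (fun p : sphere (0:E3) 1 × ℝ =>
        ENNReal.ofReal (p.2^2) * ENNReal.ofReal (H (p.2 • (p.1 : E3)))) := by
      apply Measurable.fun_mul
      · exact (ENNReal.measurable_ofReal.comp ((measurable_snd.pow_const 2)))
      · exact ENNReal.measurable_ofReal.comp (hm.comp hsm.measurable)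
    exact Measurable.lintegral_prod_right' (ν := volume.restrict (Ioi (0:ℝ))) hf
  have mA : Measurable A := mAB H1 mH1
  have mB : Measurable B := mAB H2 mH2
  -- per-ω chain
  have hchain : ∀ ω : sphere (0:E3) 1,
      ENNReal.ofReal ((r * (t + 2 - r) ^ s) * (φ (r • (ω : E3))) ^ 2) ≤ 2 * A ω + 3 * B ω := by
    intro ω
    have hcontg : Continuous (fun ρ : ℝ => φ (ρ • (ω : E3))) :=
      hφ.continuous.comp (continuous_id.smul continuous_const)
    have hcont52 : Continuous (fun ρ : ℝ => 2 * F5 ω ρ + 3 * F2 ω ρ) := by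
      apply Continuous.add
      · exact continuous_const.mul (((continuous_id.pow 2).mul
          (hwcont'.comp (continuous_const.sub continuous_id))).mul ((hDcont ω).pow 2))
      · exact continuous_const.mul ((hwcont'.comp (continuous_const.sub continuous_id)).mul
          (hcontg.pow 2))
    have hIntOn : IntegrableOn (fun ρ => 2 * F5 ω ρ + 3 * F2 ω ρ) (Ioc (0:ℝ) (t+1)) := by
      apply (hcont52.continuousOn).integrableOn_compact isCompact_Icc |>.mono_set
        Ioc_subset_Icc_self
    have hnn52 : (0:ℝ≥0∞) ≤ 0 := le_rfl
    have h1 : ENNReal.ofReal ((r * (t + 2 - r) ^ s) * (φ (r • (ω : E3))) ^ 2)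
        ≤ ENNReal.ofReal (∫ ρ in Ioc (0:ℝ) (t+1), (2 * F5 ω ρ + 3 * F2 ω ρ)) := by
      apply ENNReal.ofReal_le_ofReal
      rw [← intervalIntegral.integral_of_le ht1]
      exact hkey ω
    have h2 : ENNReal.ofReal (∫ ρ in Ioc (0:ℝ) (t+1), (2 * F5 ω ρ + 3 * F2 ω ρ))
        = ∫⁻ ρ in Ioc (0:ℝ) (t+1), ENNReal.ofReal (2 * F5 ω ρ + 3 * F2 ω ρ) := by
      apply ofReal_integral_eq_lintegral_ofReal hIntOn
      filter_upwards [ae_restrict_mem measurableSet_Ioc] with ρ hρ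
      have hw : (0:ℝ) ≤ (t+2-ρ)^s := Real.rpow_nonneg (by linarith [hρ.2]) s
      have h5 : (0:ℝ) ≤ F5 ω ρ := mul_nonneg (mul_nonneg (sq_nonneg ρ) hw) (sq_nonneg _)
      have hf2 : (0:ℝ) ≤ F2 ω ρ := mul_nonneg hw (sq_nonneg _)
      show (0:ℝ) ≤ 2 * F5 ω ρ + 3 * F2 ω ρ
      linarith
    have h3 : (∫⁻ ρ in Ioc (0:ℝ) (t+1), ENNReal.ofReal (2 * F5 ω ρ + 3 * F2 ω ρ))
        ≤ 2 * (∫⁻ ρ in Ioc (0:ℝ) (t+1), ENNReal.ofReal (F5 ω ρ))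
          + 3 * ∫⁻ ρ in Ioc (0:ℝ) (t+1), ENNReal.ofReal (F2 ω ρ) := by
      have hm5 : Measurable fun ρ => ENNReal.ofReal (F5 ω ρ) := by
        apply ENNReal.measurable_ofReal.comp
        exact (((measurable_id.pow_const 2).mul
          ((hwcont'.comp (continuous_const.sub continuous_id)).measurable)).mul
          ((hDcont ω).measurable.pow_const 2))
      calc (∫⁻ ρ in Ioc (0:ℝ) (t+1), ENNReal.ofReal (2 * F5 ω ρ + 3 * F2 ω ρ))
          ≤ ∫⁻ ρ in Ioc (0:ℝ) (t+1),
              (2 * ENNReal.ofReal (F5 ω ρ) + 3 * ENNReal.ofReal (F2 ω ρ)) := by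
            apply lintegral_mono
            intro ρ
            calc ENNReal.ofReal (2 * F5 ω ρ + 3 * F2 ω ρ)
                ≤ ENNReal.ofReal (2 * F5 ω ρ) + ENNReal.ofReal (3 * F2 ω ρ) :=
                  ENNReal.ofReal_add_le
              _ = 2 * ENNReal.ofReal (F5 ω ρ) + 3 * ENNReal.ofReal (F2 ω ρ) := by
                  rw [ENNReal.ofReal_mul (by norm_num : (0:ℝ) ≤ 2),
                    ENNReal.ofReal_mul (by norm_num : (0:ℝ) ≤ 3)]
                  norm_num
        _ = 2 * (∫⁻ ρ in Ioc (0:ℝ) (t+1), ENNReal.ofReal (F5 ω ρ))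
            + 3 * ∫⁻ ρ in Ioc (0:ℝ) (t+1), ENNReal.ofReal (F2 ω ρ) := by
            rw [lintegral_add_left (hm5.const_mul 2), lintegral_const_mul 2 hm5]
            congr 1
            apply lintegral_const_mul'
            exact ENNReal.ofNat_ne_top
    rw [hA_eq ω, hB_eq ω]
    exact le_trans h1 (le_trans (le_of_eq h2) h3)
  -- integrate the chain over the sphere
  have hSint : Integrable (fun ω : sphere (0:E3) 1 => (φ (r • (ω : E3))) ^ 2) sphereMeasure := by
    have hc : Continuous (fun ω : sphere (0:E3) 1 => (φ (r • (ω : E3))) ^ 2) :=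
      ((hφ.continuous.comp (by fun_prop) :
        Continuous fun ω : sphere (0:E3) 1 => φ (r • (ω : E3))).pow 2)
    apply hc.integrable_of_hasCompactSupport
    exact IsCompact.of_isClosed_subset isCompact_univ (isClosed_tsupport _) (subset_univ _)
  have hcnn : (0:ℝ) ≤ r * (t + 2 - r) ^ s :=
    mul_nonneg hr.le (Real.rpow_nonneg (by linarith) s)
  have hSnn : (0:ℝ) ≤ ∫ ω : sphere (0:E3) 1, (φ (r • (ω : E3))) ^ 2 ∂sphereMeasure :=
    integral_nonneg fun ω => sq_nonneg _
  have hmain : (r * (t + 2 - r) ^ s) *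
      (∫ ω : sphere (0:E3) 1, (φ (r • (ω : E3))) ^ 2 ∂sphereMeasure)
      ≤ 2 * (∫ x, H1 x) + 3 * (∫ x, H2 x) := by
    have e1 : ENNReal.ofReal ((r * (t + 2 - r) ^ s) *
        ∫ ω : sphere (0:E3) 1, (φ (r • (ω : E3))) ^ 2 ∂sphereMeasure)
        = ∫⁻ ω, ENNReal.ofReal ((r * (t + 2 - r) ^ s) * (φ (r • (ω : E3))) ^ 2) ∂sphereMeasure := by
      rw [← MeasureTheory.integral_const_mul]
      exact ofReal_integral_eq_lintegral_ofReal (hSint.const_mul _)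
        (ae_of_all _ fun ω => mul_nonneg hcnn (sq_nonneg _))
    have e2 : (∫⁻ ω, ENNReal.ofReal ((r * (t + 2 - r) ^ s) * (φ (r • (ω : E3))) ^ 2) ∂sphereMeasure)
        ≤ 2 * (∫⁻ ω, A ω ∂sphereMeasure) + 3 * ∫⁻ ω, B ω ∂sphereMeasure := by
      calc _ ≤ ∫⁻ ω, (2 * A ω + 3 * B ω) ∂sphereMeasure := lintegral_mono hchain
        _ = _ := by
          rw [lintegral_add_left (mA.const_mul 2), lintegral_const_mul 2 mA,
            lintegral_const_mul 3 mB]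
    rw [← hpolar1, ← hpolar2, ← hofReal1, ← hofReal2] at e2
    have e3 : (2 : ℝ≥0∞) * ENNReal.ofReal (∫ x, H1 x) + 3 * ENNReal.ofReal (∫ x, H2 x)
        = ENNReal.ofReal (2 * (∫ x, H1 x) + 3 * (∫ x, H2 x)) := by
      rw [ENNReal.ofReal_add (by linarith) (by linarith),
        ENNReal.ofReal_mul (by norm_num : (0:ℝ) ≤ 2),
        ENNReal.ofReal_mul (by norm_num : (0:ℝ) ≤ 3)]
      norm_num
    rw [e3] at e2
    have := le_trans (le_of_eq e1) e2
    exact (ENNReal.ofReal_le_ofReal_iff (by linarith)).mp this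
  -- final numeric computation
  have hLHSnn : (0:ℝ) ≤ r ^ ((1:ℝ)/2) * (t + 2 - r) ^ (s / 2) *
      Real.sqrt (∫ ω : sphere (0:E3) 1, (φ (r • (ω : E3))) ^ 2 ∂sphereMeasure) :=
    mul_nonneg (mul_nonneg (Real.rpow_nonneg hr.le _)
      (Real.rpow_nonneg (by linarith) _)) (Real.sqrt_nonneg _)
  have hLHS_sq : (r ^ ((1:ℝ)/2) * (t + 2 - r) ^ (s / 2) *
      Real.sqrt (∫ ω : sphere (0:E3) 1, (φ (r • (ω : E3))) ^ 2 ∂sphereMeasure)) ^ 2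
      = (r * (t + 2 - r) ^ s) *
        ∫ ω : sphere (0:E3) 1, (φ (r • (ω : E3))) ^ 2 ∂sphereMeasure := by
    rw [mul_pow, mul_pow, Real.sq_sqrt hSnn, hsq (t + 2 - r) (by linarith)]
    have hhalf : (r ^ ((1:ℝ)/2)) ^ 2 = r := by
      rw [← Real.rpow_natCast (r ^ ((1:ℝ)/2)) 2, ← Real.rpow_mul hr.le]
      norm_num
    rw [hhalf]
  calc r ^ ((1:ℝ)/2) * (t + 2 - r) ^ (s / 2) *
      Real.sqrt (∫ ω : sphere (0:E3) 1, (φ (r • (ω : E3))) ^ 2 ∂sphereMeasure)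
      = Real.sqrt ((r * (t + 2 - r) ^ s) *
          ∫ ω : sphere (0:E3) 1, (φ (r • (ω : E3))) ^ 2 ∂sphereMeasure) := by
        rw [← hLHS_sq, Real.sqrt_sq hLHSnn]
    _ ≤ Real.sqrt ((2 * (Real.sqrt (∫ x, H1 x) + Real.sqrt (∫ x, H2 x))) ^ 2) := by
        apply Real.sqrt_le_sqrt
        nlinarith [Real.sq_sqrt hP1nn, Real.sq_sqrt hP2nn, Real.sqrt_nonneg (∫ x, H1 x),
          Real.sqrt_nonneg (∫ x, H2 x), hmain]
    _ = 2 * (Real.sqrt (∫ x, H1 x) + Real.sqrt (∫ x, H2 x)) := Real.sqrt_sq hRHSnn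

end
end

section
/- For every s with 1 < s < 2, every t ≥ 0, and every r with 0 ≤ r ≤ t+1, one has (t+2−(s−1)r)(t+2+r)^{s−1} ≥ (t+2−r)^{s−1}(t+2+(s−1)r). Equivalently, for every x ∈ [0,1) and s ∈ (1,2), (1−(s−1)x)(1+x)^{s−1} ≥ (1−x)^{s−1}(1+(s−1)x). -/
/-!
Dividing by `(t + 2) ^ s` reduces the first form to the second with `x = r / (t + 2)` and
`σ = s - 1`. For `0 ≤ σ ≤ 1` the difference
`g(y) = (1 - σ y)(1 + y)^σ - (1 + σ y)(1 - y)^σ` vanishes at `0` and has derivative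
`σ (1 + σ) y ((1 - y)^(σ-1) - (1 + y)^(σ-1))`, which is nonnegative on `[0, 1)` because
`u ↦ u^(σ-1)` is antitone. Hence `g ≥ 0` on `[0, 1)`.
-/

open Real Set

noncomputable def taylorGap (σ y : ℝ) : ℝ :=
  (1 - σ * y) * (1 + y) ^ σ - (1 + σ * y) * (1 - y) ^ σ

lemma taylorGap_zero (σ : ℝ) : taylorGap σ 0 = 0 := by
  simp [taylorGap]

lemma hasDerivAt_taylorGap (σ : ℝ) {y : ℝ} (hy : y ∈ Ioo (-1 : ℝ) 1) :
    HasDerivAt (taylorGap σ)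
      (σ * (1 + σ) * (y * ((1 - y) ^ (σ - 1) - (1 + y) ^ (σ - 1)))) y := by
  obtain ⟨hy₁, hy₂⟩ := hy
  have hp : 0 < 1 + y := by linarith
  have hm : 0 < 1 - y := by linarith
  have hplus : HasDerivAt (fun y : ℝ => (1 + y) ^ σ) (σ * (1 + y) ^ (σ - 1)) y := by
    simpa using ((hasDerivAt_id y).const_add 1).rpow_const (p := σ) (Or.inl hp.ne')
  have hminus : HasDerivAt (fun y : ℝ => (1 - y) ^ σ) (-(σ * (1 - y) ^ (σ - 1))) y := by
    simpa using ((hasDerivAt_id y).const_sub 1).rpow_const (p := σ) (Or.inl hm.ne')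
  have hlin (c : ℝ) : HasDerivAt (fun y : ℝ => 1 + c * y) c y := by
    simpa using ((hasDerivAt_id y).const_mul c).const_add 1
  have eplus : (1 + y) ^ σ = (1 + y) ^ (σ - 1) * (1 + y) := by
    rw [← rpow_add_one hp.ne']; ring_nf
  have eminus : (1 - y) ^ σ = (1 - y) ^ (σ - 1) * (1 - y) := by
    rw [← rpow_add_one hm.ne']; ring_nf
  refine ((((hlin (-σ)).mul hplus).sub ((hlin σ).mul hminus)).congr_of_eventuallyEq
    (Filter.Eventually.of_forall fun z => by
      simp only [taylorGap, Pi.sub_apply, Pi.mul_apply]; ring)).congr_deriv ?_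
  rw [eplus, eminus]; ring

lemma taylorGap_monotoneOn {σ : ℝ} (hσ₀ : 0 ≤ σ) (hσ₁ : σ ≤ 1) :
    MonotoneOn (taylorGap σ) (Ico 0 1) := by
  have hsub : Ico (0 : ℝ) 1 ⊆ Ioo (-1) 1 := fun y hy => ⟨by linarith [hy.1], hy.2⟩
  refine monotoneOn_of_hasDerivWithinAt_nonneg (convex_Ico 0 1)
    (fun y hy => (hasDerivAt_taylorGap σ (hsub hy)).continuousAt.continuousWithinAt)
    (fun y hy => (hasDerivAt_taylorGap σ (hsub (interior_subset hy))).hasDerivWithinAt) ?_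
  rintro y hy
  rw [interior_Ico] at hy
  have hpow : (1 + y) ^ (σ - 1) ≤ (1 - y) ^ (σ - 1) :=
    rpow_le_rpow_of_nonpos (by linarith [hy.2]) (by linarith [hy.1]) (by linarith)
  exact mul_nonneg (by positivity) (mul_nonneg hy.1.le (sub_nonneg.mpr hpow))

lemma taylorGap_nonneg {σ x : ℝ} (hσ₀ : 0 ≤ σ) (hσ₁ : σ ≤ 1) (hx₀ : 0 ≤ x) (hx₁ : x < 1) :
    0 ≤ taylorGap σ x := by
  rw [← taylorGap_zero σ]
  exact taylorGap_monotoneOn hσ₀ hσ₁ ⟨le_rfl, by linarith⟩ ⟨hx₀, hx₁⟩ hx₀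

lemma one_sub_rpow_mul_le {σ x : ℝ} (hσ₀ : 0 ≤ σ) (hσ₁ : σ ≤ 1) (hx₀ : 0 ≤ x) (hx₁ : x < 1) :
    (1 - x) ^ σ * (1 + σ * x) ≤ (1 - σ * x) * (1 + x) ^ σ := by
  have := taylorGap_nonneg hσ₀ hσ₁ hx₀ hx₁
  rw [taylorGap] at this
  linarith

lemma sub_rpow_mul_le {σ a r : ℝ} (hσ₀ : 0 ≤ σ) (hσ₁ : σ ≤ 1) (hr₀ : 0 ≤ r) (hra : r < a) :
    (a - r) ^ σ * (a + σ * r) ≤ (a - σ * r) * (a + r) ^ σ := by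
  have ha : 0 < a := hr₀.trans_lt hra
  set x := r / a
  have hr : r = a * x := (mul_div_cancel₀ r ha.ne').symm
  have hx₀ : 0 ≤ x := div_nonneg hr₀ ha.le
  have hx₁ : x < 1 := (div_lt_one ha).mpr hra
  have key := one_sub_rpow_mul_le hσ₀ hσ₁ hx₀ hx₁
  have hscale : 0 ≤ a ^ σ * a := by positivity
  calc (a - r) ^ σ * (a + σ * r)
      = a ^ σ * a * ((1 - x) ^ σ * (1 + σ * x)) := by
        rw [hr, show a - a * x = a * (1 - x) by ring, mul_rpow ha.le (by linarith)]; ring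
    _ ≤ a ^ σ * a * ((1 - σ * x) * (1 + x) ^ σ) := mul_le_mul_of_nonneg_left key hscale
    _ = (a - σ * r) * (a + r) ^ σ := by
        rw [hr, show a + a * x = a * (1 + x) by ring, mul_rpow ha.le (by linarith)]; ring

/-- **The elementary inequality (taylor)** from the proof of Theorem 2.1, together
with its equivalent normalized form obtained by setting `x = r/(t+2)`. -/
theorem taylor_inequality :
    (∀ s t r : ℝ, 1 < s → s < 2 → 0 ≤ t → 0 ≤ r → r ≤ t + 1 →
      (t + 2 - r) ^ (s - 1) * (t + 2 + (s - 1) * r)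
        ≤ (t + 2 - (s - 1) * r) * (t + 2 + r) ^ (s - 1)) ∧
    (∀ x s : ℝ, 0 ≤ x → x < 1 → 1 < s → s < 2 →
      (1 - x) ^ (s - 1) * (1 + (s - 1) * x)
        ≤ (1 - (s - 1) * x) * (1 + x) ^ (s - 1)) :=
  ⟨fun _ _ _ hs₁ hs₂ _ hr₀ hrt =>
      sub_rpow_mul_le (by linarith) (by linarith) hr₀ (by linarith),
    fun _ _ hx₀ hx₁ hs₁ hs₂ => one_sub_rpow_mul_le (by linarith) (by linarith) hx₀ hx₁⟩
end

section
/- Let p satisfy 1 + √2 < p < 3 and let δ > 0 satisfy 2δ + (2 + 4p − 2p²)/p < 0 (such δ exists since 2 + 4p − 2p² < 0 for p > 1+√2). Then the double integral M² := ∫₀^∞ ∫₀^{t+1} (t+2+r)^{1+2/p−p} (t+2−r)^{−1+2δ} r^{2−p} dr dt is finite. -/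
open MeasureTheory Real Set

/-- The region of integration. -/
def Sreg : Set (ℝ × ℝ) := {q : ℝ × ℝ | 0 < q.1 ∧ 0 < q.2 ∧ q.2 < q.1 + 1}

lemma measurable_rpow_const_my (c : ℝ) : Measurable fun x : ℝ => x ^ c := by
  have h : (fun x : ℝ => x ^ c) = fun x : ℝ =>
      if x = 0 then (if c = 0 then 1 else 0)
      else Real.exp (Real.log x * c) * (if x < 0 then Real.cos (c * π) else 1) := by
    funext x
    rcases lt_trichotomy x 0 with hx | hx | hx
    · rw [if_neg hx.ne, if_pos hx, Real.rpow_def_of_neg hx]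
    · subst hx
      rcases eq_or_ne c 0 with hc | hc
      · simp [hc]
      · simp [hc, Real.zero_rpow hc]
    · rw [if_neg hx.ne', if_neg (not_lt.2 hx.le), Real.rpow_def_of_pos hx, mul_one]
  rw [h]
  refine Measurable.ite (measurableSet_eq) measurable_const ?_
  exact ((Real.measurable_log.mul measurable_const).exp).mul
    (Measurable.ite (measurableSet_lt measurable_id measurable_const)
      measurable_const measurable_const)

lemma mem_Sreg {q : ℝ × ℝ} : q ∈ Sreg ↔ 0 < q.1 ∧ 0 < q.2 ∧ q.2 < q.1 + 1 := Iff.rfl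

lemma measurableSet_Sreg : MeasurableSet Sreg := by
  have : Sreg = {q : ℝ × ℝ | 0 < q.1} ∩ ({q : ℝ × ℝ | 0 < q.2} ∩ {q : ℝ × ℝ | q.2 < q.1 + 1}) := by
    ext q; simp [Sreg, and_assoc]
  rw [this]
  exact (measurableSet_lt measurable_const measurable_fst).inter
    ((measurableSet_lt measurable_const measurable_snd).inter
      (measurableSet_lt measurable_snd (measurable_fst.add_const 1)))

/-- Translation lemma: `(t+2)^s` is integrable on `(0,∞)` for `s < -1`. -/
lemma lemA (s : ℝ) (hs : s < -1) :
    IntegrableOn (fun t : ℝ => (t + 2) ^ s) (Ioi (0 : ℝ)) volume := by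
  have h1 : IntegrableOn (fun x : ℝ => x ^ s) (Ioi (2 : ℝ)) volume :=
    integrableOn_Ioi_rpow_of_lt hs two_pos
  have h2 : Integrable ((Ioi (2 : ℝ)).indicator fun x => x ^ s) volume :=
    (integrable_indicator_iff measurableSet_Ioi).2 h1
  have h3 := h2.comp_add_right 2
  have h4 : (fun t : ℝ => ((Ioi (2 : ℝ)).indicator fun x => x ^ s) (t + 2))
      = (Ioi (0 : ℝ)).indicator (fun t => (t + 2) ^ s) := by
    funext t
    by_cases ht : 0 < t
    · rw [indicator_of_mem (mem_Ioi.2 (by linarith)), indicator_of_mem (mem_Ioi.2 ht)]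
    · rw [indicator_of_notMem (fun hm => ht (by have := mem_Ioi.1 hm; linarith)),
        indicator_of_notMem (fun hm => ht (mem_Ioi.1 hm))]
  rw [h4] at h3
  exact (integrable_indicator_iff measurableSet_Ioi).1 h3

/-- Integrability of `(t+2)^α * r^c` on the region. -/
lemma lemP1 (α c : ℝ) (hc1 : -1 < c) (h : α + c + 1 < -1) :
    IntegrableOn (fun q : ℝ × ℝ => (q.1 + 2) ^ α * q.2 ^ c) Sreg volume := by
  refine (integrable_indicator_iff measurableSet_Sreg).1 ?_
  set F : ℝ × ℝ → ℝ := Sreg.indicator (fun q => (q.1 + 2) ^ α * q.2 ^ c) with hF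
  have hFmeas : Measurable F := by
    refine Measurable.indicator ?_ measurableSet_Sreg
    exact ((measurable_rpow_const_my α).comp (measurable_fst.add_const 2)).mul
      ((measurable_rpow_const_my c).comp measurable_snd)
  have hslice : ∀ t : ℝ, 0 < t → ∀ r : ℝ,
      F (t, r) = (Ioo 0 (t + 1)).indicator (fun r => (t + 2) ^ α * r ^ c) r := by
    intro t ht r
    rw [hF]
    by_cases hr : r ∈ Ioo 0 (t + 1)
    · rw [indicator_of_mem hr,
        indicator_of_mem (mem_Sreg.2 ⟨ht, hr.1, hr.2⟩)]
    · rw [indicator_of_notMem hr,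
        indicator_of_notMem (fun hm => hr ⟨(mem_Sreg.1 hm).2.1, (mem_Sreg.1 hm).2.2⟩)]
  have hslice0 : ∀ t : ℝ, ¬ 0 < t → ∀ r : ℝ, F (t, r) = 0 := by
    intro t ht r
    rw [hF]
    exact indicator_of_notMem (fun hm => ht (mem_Sreg.1 hm).1) _
  have hintr : ∀ t : ℝ, IntegrableOn (fun r : ℝ => r ^ c) (Ioo 0 (t + 1)) volume := by
    intro t
    rcases le_or_gt (t + 1) 0 with h' | h'
    · rw [Ioo_eq_empty (by intro hlt; linarith)]
      simp
    · exact ((intervalIntegrable_iff_integrableOn_Ioc_of_le h'.le).1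
        (intervalIntegral.intervalIntegrable_rpow' hc1)).mono_set Ioo_subset_Ioc_self
  rw [Measure.volume_eq_prod]
  rw [integrable_prod_iff hFmeas.aestronglyMeasurable]
  constructor
  · refine Filter.Eventually.of_forall fun t => ?_
    by_cases ht : 0 < t
    · simp only [hslice t ht]
      rw [integrable_indicator_iff measurableSet_Ioo]
      exact (hintr t).const_mul _
    · simp only [hslice0 t ht]
      exact integrable_zero _ _ _
  · refine Integrable.mono'
      (g := (Ioi (0:ℝ)).indicator (fun t => (c+1)⁻¹ * (t + 2) ^ (α + c + 1)))
      ((integrable_indicator_iff measurableSet_Ioi).2 ((lemA _ h).const_mul _))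
      (hFmeas.norm.aestronglyMeasurable.integral_prod_right') ?_
    refine Filter.Eventually.of_forall fun t => ?_
    rw [Real.norm_of_nonneg (integral_nonneg fun r => norm_nonneg _)]
    by_cases ht : 0 < t
    · have h01 : (0:ℝ) ≤ t + 1 := by linarith
      have h02 : (0:ℝ) < t + 2 := by linarith
      have hcal : ∫ r, ‖F (t, r)‖ = (t + 2) ^ α * ((t + 1) ^ (c + 1) / (c + 1)) := by
        simp only [hslice t ht]
        simp_rw [norm_indicator_eq_indicator_norm]
        rw [integral_indicator measurableSet_Ioo]
        rw [setIntegral_congr_fun measurableSet_Ioo (g := fun r => (t + 2) ^ α * r ^ c)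
          (fun r hr => Real.norm_of_nonneg
            (mul_nonneg (rpow_nonneg (by linarith) _) (rpow_nonneg hr.1.le _)))]
        rw [MeasureTheory.integral_const_mul]
        congr 1
        rw [← integral_Ioc_eq_integral_Ioo, ← intervalIntegral.integral_of_le (by linarith),
          integral_rpow (Or.inl hc1), Real.zero_rpow (by linarith : c + 1 ≠ 0), sub_zero]
      rw [hcal, indicator_of_mem (mem_Ioi.2 ht)]
      have h1 : (t + 1 : ℝ) ^ (c + 1) ≤ (t + 2) ^ (c + 1) :=
        rpow_le_rpow h01 (by linarith) (by linarith)
      have h2 : (0:ℝ) ≤ (t + 2) ^ α := rpow_nonneg (by linarith) _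
      have h3 : (0:ℝ) < c + 1 := by linarith
      rw [show α + c + 1 = α + (c + 1) by ring, Real.rpow_add h02 α (c + 1), div_eq_mul_inv]
      calc (t+2) ^ α * ((t+1) ^ (c+1) * (c+1)⁻¹)
          ≤ (t+2) ^ α * ((t+2) ^ (c+1) * (c+1)⁻¹) := by
            exact mul_le_mul_of_nonneg_left
              (mul_le_mul_of_nonneg_right h1 (inv_nonneg.2 h3.le)) h2
        _ = (c+1)⁻¹ * ((t+2) ^ α * (t+2) ^ (c+1)) := by ring
    · simp only [hslice0 t ht]
      simp only [norm_zero, integral_zero]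
      exact indicator_nonneg (fun x hx => mul_nonneg (inv_nonneg.2 (by linarith : (0:ℝ) ≤ c + 1))
        (rpow_nonneg (by have := mem_Ioi.1 hx; linarith) _)) t

/-- Integrability of `(t+2)^α * (t+2-r)^b` on the region. -/
lemma lemP2 (α b : ℝ) (hb1 : -1 < b) (h : α + b + 1 < -1) :
    IntegrableOn (fun q : ℝ × ℝ => (q.1 + 2) ^ α * (q.1 + 2 - q.2) ^ b) Sreg volume := by
  refine (integrable_indicator_iff measurableSet_Sreg).1 ?_
  set F : ℝ × ℝ → ℝ := Sreg.indicator (fun q => (q.1 + 2) ^ α * (q.1 + 2 - q.2) ^ b) with hF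
  have hFmeas : Measurable F := by
    refine Measurable.indicator ?_ measurableSet_Sreg
    exact ((measurable_rpow_const_my α).comp (measurable_fst.add_const 2)).mul
      ((measurable_rpow_const_my b).comp ((measurable_fst.add_const 2).sub measurable_snd))
  have hslice : ∀ t : ℝ, 0 < t → ∀ r : ℝ,
      F (t, r) = (Ioo 0 (t + 1)).indicator (fun r => (t + 2) ^ α * (t + 2 - r) ^ b) r := by
    intro t ht r
    rw [hF]
    by_cases hr : r ∈ Ioo 0 (t + 1)
    · rw [indicator_of_mem hr,
        indicator_of_mem (mem_Sreg.2 ⟨ht, hr.1, hr.2⟩)]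
    · rw [indicator_of_notMem hr,
        indicator_of_notMem (fun hm => hr ⟨(mem_Sreg.1 hm).2.1, (mem_Sreg.1 hm).2.2⟩)]
  have hslice0 : ∀ t : ℝ, ¬ 0 < t → ∀ r : ℝ, F (t, r) = 0 := by
    intro t ht r
    rw [hF]
    exact indicator_of_notMem (fun hm => ht (mem_Sreg.1 hm).1) _
  have hintr : ∀ t : ℝ, 0 < t →
      IntegrableOn (fun r : ℝ => (t + 2 - r) ^ b) (Ioo 0 (t + 1)) volume := by
    intro t ht
    have h1 : IntervalIntegrable (fun x : ℝ => x ^ b) volume (t + 2) 1 :=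
      intervalIntegral.intervalIntegrable_rpow' hb1
    have h2 := h1.comp_sub_left (t + 2)
    have h3 : IntervalIntegrable (fun r : ℝ => (t + 2 - r) ^ b) volume 0 (t + 1) := by
      have e1 : t + 2 - (t + 2) = (0:ℝ) := by ring
      have e2 : t + 2 - 1 = t + 1 := by ring
      rwa [e1, e2] at h2
    exact ((intervalIntegrable_iff_integrableOn_Ioc_of_le (by linarith)).1 h3).mono_set
      Ioo_subset_Ioc_self
  rw [Measure.volume_eq_prod]
  rw [integrable_prod_iff hFmeas.aestronglyMeasurable]
  constructor
  · refine Filter.Eventually.of_forall fun t => ?_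
    by_cases ht : 0 < t
    · simp only [hslice t ht]
      rw [integrable_indicator_iff measurableSet_Ioo]
      exact (hintr t ht).const_mul _
    · simp only [hslice0 t ht]
      exact integrable_zero _ _ _
  · refine Integrable.mono'
      (g := (Ioi (0:ℝ)).indicator (fun t => (b+1)⁻¹ * (t + 2) ^ (α + b + 1)))
      ((integrable_indicator_iff measurableSet_Ioi).2 ((lemA _ h).const_mul _))
      (hFmeas.norm.aestronglyMeasurable.integral_prod_right') ?_
    refine Filter.Eventually.of_forall fun t => ?_
    rw [Real.norm_of_nonneg (integral_nonneg fun r => norm_nonneg _)]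
    by_cases ht : 0 < t
    · have h02 : (0:ℝ) < t + 2 := by linarith
      have hcal : ∫ r, ‖F (t, r)‖
          = (t + 2) ^ α * (((t + 2) ^ (b + 1) - 1) / (b + 1)) := by
        simp only [hslice t ht]
        simp_rw [norm_indicator_eq_indicator_norm]
        rw [integral_indicator measurableSet_Ioo]
        rw [setIntegral_congr_fun measurableSet_Ioo (g := fun r => (t + 2) ^ α * (t + 2 - r) ^ b)
          (fun r hr => Real.norm_of_nonneg
            (mul_nonneg (rpow_nonneg (by linarith) _)
              (rpow_nonneg (by have := hr.2; simp only [mem_Ioo] at hr; linarith) _)))]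
        rw [MeasureTheory.integral_const_mul]
        congr 1
        rw [← integral_Ioc_eq_integral_Ioo, ← intervalIntegral.integral_of_le (by linarith)]
        have hc : ∫ r in (0:ℝ)..(t+1), (t + 2 - r) ^ b
            = ∫ u in (t + 2 - (t+1))..(t + 2 - 0), (fun u : ℝ => u ^ b) u := by
          rw [← intervalIntegral.integral_comp_sub_left (fun u : ℝ => u ^ b) (t + 2)]
        rw [hc]
        have e1 : t + 2 - 0 = t + 2 := by ring
        have e2 : t + 2 - (t + 1) = (1:ℝ) := by ring
        rw [e1, e2, integral_rpow (Or.inl hb1), Real.one_rpow]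
      rw [hcal, indicator_of_mem (mem_Ioi.2 ht)]
      have h2 : (0:ℝ) ≤ (t + 2) ^ α := rpow_nonneg (by linarith) _
      have h3 : (0:ℝ) < b + 1 := by linarith
      have h4 : ((t + 2) ^ (b + 1) - 1) / (b + 1) ≤ (t + 2) ^ (b + 1) / (b+1) :=
        (div_le_div_iff_of_pos_right h3).2 (by linarith)
      calc (t+2) ^ α * (((t+2) ^ (b+1) - 1) / (b+1))
          ≤ (t+2) ^ α * ((t+2) ^ (b+1) / (b+1)) := mul_le_mul_of_nonneg_left h4 h2
        _ = (b+1)⁻¹ * ((t+2) ^ α * (t+2) ^ (b+1)) := by ring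
        _ = (b+1)⁻¹ * (t+2) ^ (α + (b+1)) := by rw [Real.rpow_add h02 α (b+1)]
        _ = (b+1)⁻¹ * (t+2) ^ (α + b + 1) := by rw [show α + (b + 1) = α + b + 1 by ring]
    · simp only [hslice0 t ht]
      simp only [norm_zero, integral_zero]
      exact indicator_nonneg (fun x hx => mul_nonneg (inv_nonneg.2 (by linarith : (0:ℝ) ≤ b + 1))
        (rpow_nonneg (by have := mem_Ioi.1 hx; linarith) _)) t

/-- **Finiteness of the weight integral `M²`** (Section 4): the double integral
`∫₀^∞ ∫₀^{t+1} (t+2+r)^{1+2/p−p} (t+2−r)^{−1+2δ} r^{2−p} dr dt` is finite for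
`1+√2 < p < 3` and `δ > 0` with `2δ + (2+4p−2p²)/p < 0`. -/
theorem M_squared_finite (p δ : ℝ) (hp1 : 1 + Real.sqrt 2 < p) (hp2 : p < 3)
    (hδ : 0 < δ) (hδp : 2 * δ + (2 + 4 * p - 2 * p ^ 2) / p < 0) :
    IntegrableOn
      (fun q : ℝ × ℝ =>
        (q.1 + 2 + q.2) ^ (1 + 2 / p - p) * (q.1 + 2 - q.2) ^ (-1 + 2 * δ) *
          q.2 ^ (2 - p))
      {q : ℝ × ℝ | 0 < q.1 ∧ 0 < q.2 ∧ q.2 < q.1 + 1}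
      (volume : Measure (ℝ × ℝ)) := by
  have hsqrt : (1:ℝ) < Real.sqrt 2 := by
    nlinarith [Real.sq_sqrt (by norm_num : (0:ℝ) ≤ 2), Real.sqrt_nonneg 2]
  have hp2' : 2 < p := by linarith
  have hp0 : 0 < p := by linarith
  set a := 1 + 2 / p - p with ha
  set b := -1 + 2 * δ with hb
  set c := 2 - p with hc
  -- key inequality : a + b + c + 1 < -1
  have hdiv : (2 + 4 * p - 2 * p ^ 2) / p * p = 2 + 4 * p - 2 * p ^ 2 :=
    div_mul_cancel₀ _ hp0.ne'
  have h2p : 2 / p * p = 2 := div_mul_cancel₀ _ hp0.ne'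
  have hkey : a + b + c + 1 < -1 := by
    rw [ha, hb, hc]
    nlinarith [mul_pos hp0 hp0, mul_lt_mul_of_pos_right hδp hp0]
  have h2pgt : (2:ℝ)/3 < 2 / p := by
    apply div_lt_div_of_pos_left (by norm_num) hp0 hp2
  have ha0 : a < 0 := by
    have : 2 / p < 1 := (div_lt_one hp0).2 hp2'
    rw [ha]; linarith
  have hb1 : (-1:ℝ) < b := by rw [hb]; linarith
  have hbu : b < 1 := by
    rw [hb]
    nlinarith [hkey, h2pgt]
  have hc1 : (-1:ℝ) < c := by rw [hc]; linarith
  have hc0 : c < 0 := by rw [hc]; linarith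
  have hcu : -c < 1 := by rw [hc]; linarith
  set S₁ : Set (ℝ × ℝ) := Sreg ∩ {q | q.2 ≤ (q.1 + 1) / 2} with hS1
  set S₂ : Set (ℝ × ℝ) := Sreg ∩ {q | (q.1 + 1) / 2 ≤ q.2} with hS2
  have hS1m : MeasurableSet S₁ :=
    measurableSet_Sreg.inter
      (measurableSet_le measurable_snd ((measurable_fst.add_const 1).div_const 2))
  have hS2m : MeasurableSet S₂ :=
    measurableSet_Sreg.inter
      (measurableSet_le ((measurable_fst.add_const 1).div_const 2) measurable_snd)
  have hfmeas : Measurable (fun q : ℝ × ℝ =>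
      (q.1 + 2 + q.2) ^ a * (q.1 + 2 - q.2) ^ b * q.2 ^ c) := by
    exact (((measurable_rpow_const_my a).comp ((measurable_fst.add_const 2).add
        measurable_snd)).mul
      ((measurable_rpow_const_my b).comp ((measurable_fst.add_const 2).sub measurable_snd))).mul
      ((measurable_rpow_const_my c).comp measurable_snd)
  have hI1 : IntegrableOn (fun q : ℝ × ℝ =>
      (q.1 + 2 + q.2) ^ a * (q.1 + 2 - q.2) ^ b * q.2 ^ c) S₁ volume := by
    refine Integrable.mono'
      (g := fun q : ℝ × ℝ => 2 * ((q.1 + 2) ^ (a + b) * q.2 ^ c))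
      (((lemP1 (a + b) c hc1 (by linarith)).mono_set inter_subset_left).const_mul 2)
      (hfmeas.aestronglyMeasurable.restrict) ?_
    filter_upwards [ae_restrict_mem hS1m] with q hq
    obtain ⟨hqS, hhalf⟩ := hq
    obtain ⟨ht, hr, hrt⟩ := mem_Sreg.1 hqS
    set t := q.1; set r := q.2
    have h02 : (0:ℝ) < t + 2 := by linarith
    have hps : (0:ℝ) < t + 2 + r := by linarith
    have hms : (0:ℝ) < t + 2 - r := by linarith
    have h₁ : (t + 2 + r) ^ a ≤ (t + 2) ^ a :=
      rpow_le_rpow_of_nonpos h02 (by linarith) ha0.le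
    have h₂ : (t + 2 - r) ^ b ≤ 2 * (t + 2) ^ b := by
      rcases le_or_gt 0 b with hbs | hbs
      · have e1 : (t + 2 - r) ^ b ≤ (t + 2) ^ b := rpow_le_rpow hms.le (by linarith) hbs
        nlinarith [rpow_nonneg h02.le b]
      · have hhalf2 : (t + 2) / 2 ≤ t + 2 - r := by
          have : r ≤ (t + 1) / 2 := hhalf
          linarith
        have e1 : (t + 2 - r) ^ b ≤ ((t + 2) / 2) ^ b :=
          rpow_le_rpow_of_nonpos (by linarith) hhalf2 hbs.le
        have e2 : ((t + 2) / 2 : ℝ) ^ b = (t + 2) ^ b * ((2:ℝ) ^ b)⁻¹ := by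
          rw [Real.div_rpow h02.le (by norm_num), div_eq_mul_inv]
        have e3 : ((2:ℝ) ^ b)⁻¹ = (2:ℝ) ^ (-b) := (Real.rpow_neg (by norm_num) b).symm
        have e4 : (2:ℝ) ^ (-b) ≤ 2 := by
          calc (2:ℝ) ^ (-b) ≤ (2:ℝ) ^ (1:ℝ) :=
            Real.rpow_le_rpow_of_exponent_le (by norm_num) (by linarith)
          _ = 2 := Real.rpow_one 2
        have e5 : (0:ℝ) ≤ (t + 2) ^ b := rpow_nonneg h02.le b
        calc (t + 2 - r) ^ b ≤ (t + 2) ^ b * (2:ℝ) ^ (-b) := by rw [← e3, ← e2]; exact e1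
          _ ≤ (t + 2) ^ b * 2 := mul_le_mul_of_nonneg_left e4 e5
          _ = 2 * (t + 2) ^ b := by ring
    have hnn1 : (0:ℝ) ≤ (t + 2 + r) ^ a := rpow_nonneg hps.le a
    have hnn2 : (0:ℝ) ≤ (t + 2 - r) ^ b := rpow_nonneg hms.le b
    have hnn3 : (0:ℝ) ≤ r ^ c := rpow_nonneg hr.le c
    have hnn4 : (0:ℝ) ≤ (t + 2) ^ a := rpow_nonneg h02.le a
    have hprod : (t + 2 + r) ^ a * (t + 2 - r) ^ b ≤ (t + 2) ^ a * (2 * (t + 2) ^ b) :=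
      mul_le_mul h₁ h₂ hnn2 hnn4
    have hsum : (t + 2 : ℝ) ^ (a + b) = (t + 2) ^ a * (t + 2) ^ b := Real.rpow_add h02 a b
    rw [Real.norm_of_nonneg (mul_nonneg (mul_nonneg hnn1 hnn2) hnn3)]
    calc (t + 2 + r) ^ a * (t + 2 - r) ^ b * r ^ c
        ≤ (t + 2) ^ a * (2 * (t + 2) ^ b) * r ^ c :=
          mul_le_mul_of_nonneg_right hprod hnn3
      _ = 2 * ((t + 2) ^ (a + b) * r ^ c) := by rw [hsum]; ring
  have hI2 : IntegrableOn (fun q : ℝ × ℝ =>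
      (q.1 + 2 + q.2) ^ a * (q.1 + 2 - q.2) ^ b * q.2 ^ c) S₂ volume := by
    refine Integrable.mono'
      (g := fun q : ℝ × ℝ => 4 * ((q.1 + 2) ^ (a + c) * (q.1 + 2 - q.2) ^ b))
      (((lemP2 (a + c) b hb1 (by linarith)).mono_set inter_subset_left).const_mul 4)
      (hfmeas.aestronglyMeasurable.restrict) ?_
    filter_upwards [ae_restrict_mem hS2m] with q hq
    obtain ⟨hqS, hhalf⟩ := hq
    obtain ⟨ht, hr, hrt⟩ := mem_Sreg.1 hqS
    set t := q.1; set r := q.2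
    have h02 : (0:ℝ) < t + 2 := by linarith
    have hps : (0:ℝ) < t + 2 + r := by linarith
    have hms : (0:ℝ) < t + 2 - r := by linarith
    have h₁ : (t + 2 + r) ^ a ≤ (t + 2) ^ a :=
      rpow_le_rpow_of_nonpos h02 (by linarith) ha0.le
    have hquarter : (t + 2) / 4 ≤ r := by
      have : (t + 1) / 2 ≤ r := hhalf
      linarith
    have h₂ : r ^ c ≤ (t + 2) ^ c * 4 := by
      have e1 : r ^ c ≤ ((t + 2) / 4) ^ c :=
        rpow_le_rpow_of_nonpos (by linarith) hquarter hc0.le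
      have e2 : ((t + 2) / 4 : ℝ) ^ c = (t + 2) ^ c * ((4:ℝ) ^ c)⁻¹ := by
        rw [Real.div_rpow h02.le (by norm_num), div_eq_mul_inv]
      have e3 : ((4:ℝ) ^ c)⁻¹ = (4:ℝ) ^ (-c) := (Real.rpow_neg (by norm_num) c).symm
      have e4 : (4:ℝ) ^ (-c) ≤ 4 := by
        calc (4:ℝ) ^ (-c) ≤ (4:ℝ) ^ (1:ℝ) :=
          Real.rpow_le_rpow_of_exponent_le (by norm_num) (by linarith)
        _ = 4 := Real.rpow_one 4
      have e5 : (0:ℝ) ≤ (t + 2) ^ c := rpow_nonneg h02.le c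
      calc r ^ c ≤ (t + 2) ^ c * (4:ℝ) ^ (-c) := by rw [← e3, ← e2]; exact e1
        _ ≤ (t + 2) ^ c * 4 := mul_le_mul_of_nonneg_left e4 e5
    have hnn1 : (0:ℝ) ≤ (t + 2 + r) ^ a := rpow_nonneg hps.le a
    have hnn2 : (0:ℝ) ≤ (t + 2 - r) ^ b := rpow_nonneg hms.le b
    have hnn3 : (0:ℝ) ≤ r ^ c := rpow_nonneg hr.le c
    have hnn4 : (0:ℝ) ≤ (t + 2) ^ a := rpow_nonneg h02.le a
    have hnn5 : (0:ℝ) ≤ (t + 2) ^ c := rpow_nonneg h02.le c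
    have hsum : (t + 2 : ℝ) ^ (a + c) = (t + 2) ^ a * (t + 2) ^ c := Real.rpow_add h02 a c
    rw [Real.norm_of_nonneg (mul_nonneg (mul_nonneg hnn1 hnn2) hnn3)]
    have step1 : (t + 2 + r) ^ a * (t + 2 - r) ^ b * r ^ c
        ≤ (t + 2) ^ a * (t + 2 - r) ^ b * ((t + 2) ^ c * 4) := by
      apply mul_le_mul (mul_le_mul_of_nonneg_right h₁ hnn2) h₂ hnn3
      exact mul_nonneg hnn4 hnn2
    calc (t + 2 + r) ^ a * (t + 2 - r) ^ b * r ^ c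
        ≤ (t + 2) ^ a * (t + 2 - r) ^ b * ((t + 2) ^ c * 4) := step1
      _ = 4 * ((t + 2) ^ (a + c) * (t + 2 - r) ^ b) := by rw [hsum]; ring
  have hsub : Sreg ⊆ S₁ ∪ S₂ := by
    intro q hq
    rcases le_total q.2 ((q.1 + 1) / 2) with h' | h'
    · exact Or.inl ⟨hq, h'⟩
    · exact Or.inr ⟨hq, h'⟩
  exact (hI1.union hI2).mono_set hsub
end
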